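/- arXiv:1112.4327 — 10 statements merged into one kernel-verified Lean document; each statement's English description precedes it below -/
import Mathlib

section
/- For all z ≥ 0 one has ω(z) ≤ (η−1)²/(η+1)², and ω(z₀) = (η−1)²/(η+1)²; that is, ω attains its maximum over [0,∞) at z₀ = √(γ₁·γ₂), with maximum value (η−1)²/(η+1)². -/
/-- With `γ₁, γ₂ > 0`,
`ω(z) = ((γ₂ - z)/(γ₂ + z))·((z - γ₁)/(z + γ₁))`, `η = √(γ₂/γ₁)` and
`z₀ = √(γ₁γ₂)`, the function `ω` attains its maximum over `[0, ∞)` at `z₀`,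
with maximum value `(η-1)²/(η+1)²`. -/
theorem omega_max (γ1 γ2 : ℝ) (hγ1 : 0 < γ1) (hγ2 : 0 < γ2)
    (ω : ℝ → ℝ)
    (hω : ∀ z : ℝ, ω z = ((γ2 - z) / (γ2 + z)) * ((z - γ1) / (z + γ1)))
    (η z0 : ℝ) (hη : η = Real.sqrt (γ2 / γ1)) (hz0 : z0 = Real.sqrt (γ1 * γ2)) :
    (∀ z : ℝ, 0 ≤ z → ω z ≤ (η - 1) ^ 2 / (η + 1) ^ 2) ∧
      ω z0 = (η - 1) ^ 2 / (η + 1) ^ 2 := by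
  set a := Real.sqrt γ1 with ha
  set b := Real.sqrt γ2 with hb
  have ha0 : 0 < a := Real.sqrt_pos.mpr hγ1
  have hb0 : 0 < b := Real.sqrt_pos.mpr hγ2
  have ha2 : a ^ 2 = γ1 := Real.sq_sqrt hγ1.le
  have hb2 : b ^ 2 = γ2 := Real.sq_sqrt hγ2.le
  have hηab : η = b / a := by
    rw [hη, Real.sqrt_div' γ2 hγ1.le]
  have hz0ab : z0 = a * b := by
    rw [hz0, Real.sqrt_mul hγ1.le]
  have hmax : (η - 1) ^ 2 / (η + 1) ^ 2 = (b - a) ^ 2 / (b + a) ^ 2 := by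
    rw [hηab]
    field_simp
  have hden : ∀ z : ℝ, 0 ≤ z → 0 < (γ2 + z) * (z + γ1) := fun z hz => by positivity
  constructor
  · intro z hz
    rw [hω, hmax, div_mul_div_comm, div_le_div_iff₀ (hden z hz) (by positivity)]
    rw [← ha2, ← hb2]
    nlinarith [mul_nonneg (sq_nonneg (z - a * b)) (by positivity : (0:ℝ) ≤ a ^ 2 + b ^ 2)]
  · rw [hω, hmax, hz0ab]
    have h1 : γ2 - a * b = b * (b - a) := by nlinarith
    have h2 : γ2 + a * b = b * (b + a) := by nlinarith
    have h3 : a * b - γ1 = a * (b - a) := by nlinarith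
    have h4 : a * b + γ1 = a * (b + a) := by nlinarith
    rw [h1, h2, h3, h4]
    have hba : (0:ℝ) < b + a := by linarith
    field_simp
end

section
/- Let K ≥ 1 be a real number and suppose 0 < γ₁ < coth 1 and γ₂ > K·coth K, where coth x = cosh x / sinh x. Set θ₀ = ω(z₀)/(2 + ω(z₀)). Then θ₀ < 1/3, and for every real k with 1 ≤ k ≤ K the Von Neumann convergence factor ρ = θ₀ − (1−θ₀)·ω(k·coth k) of the Robin–Robin domain decomposition iteration satisfies |ρ| ≤ θ₀ < 1/3. -/
open Real Set

/-- `k ↦ k cosh k / sinh k` is monotone on `[1, ∞)`. -/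
lemma kcoth_monotoneOn : MonotoneOn (fun k : ℝ => k * Real.cosh k / Real.sinh k) (Set.Ici 1) := by
  have hconv : Convex ℝ (Set.Ici (1:ℝ)) := convex_Ici 1
  have hcont : ContinuousOn (fun k : ℝ => k * Real.cosh k / Real.sinh k) (Set.Ici 1) := by
    apply ContinuousOn.div
    · exact (continuous_id.mul Real.continuous_cosh).continuousOn
    · exact Real.continuous_sinh.continuousOn
    · intro x hx
      have : (0:ℝ) < x := lt_of_lt_of_le one_pos hx
      exact ne_of_gt (Real.sinh_pos_iff.mpr this)
  refine (strictMonoOn_of_deriv_pos hconv hcont ?_).monotoneOn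
  intro x hx
  rw [interior_Ici, Set.mem_Ioi] at hx
  have hx0 : (0:ℝ) < x := lt_trans one_pos hx
  have hs : 0 < Real.sinh x := Real.sinh_pos_iff.mpr hx0
  have h1 : HasDerivAt (fun k : ℝ => k * Real.cosh k) (1 * Real.cosh x + x * Real.sinh x) x :=
    (hasDerivAt_id x).mul (Real.hasDerivAt_cosh x)
  have h2 : HasDerivAt (fun k : ℝ => k * Real.cosh k / Real.sinh k)
      (((1 * Real.cosh x + x * Real.sinh x) * Real.sinh x -
        x * Real.cosh x * Real.cosh x) / Real.sinh x ^ 2) x :=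
    h1.div (Real.hasDerivAt_sinh x) (ne_of_gt hs)
  rw [h2.deriv]
  apply div_pos _ (by positivity)
  have hxs : x < Real.sinh x := Real.self_lt_sinh_iff.mpr hx0
  have hc : 1 ≤ Real.cosh x := Real.one_le_cosh x
  have hsq : Real.cosh x ^ 2 - Real.sinh x ^ 2 = 1 := Real.cosh_sq_sub_sinh_sq x
  nlinarith [hs, hxs, hc, hsq]

/-- With `γ₁, γ₂ > 0`, `ω(z) = ((γ₂ - z)/(γ₂ + z))·((z - γ₁)/(z + γ₁))`,
`z₀ = √(γ₁γ₂)`, `K ≥ 1`, `0 < γ₁ < coth 1` and `γ₂ > K·coth K`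
(where `coth x = cosh x / sinh x`), setting `θ₀ = ω(z₀)/(2 + ω(z₀))` one has
`θ₀ < 1/3`, and for every `1 ≤ k ≤ K` the Von Neumann convergence factor
`ρ = θ₀ - (1 - θ₀)·ω(k·coth k)` satisfies `|ρ| ≤ θ₀`. -/
theorem vonNeumann_rate_small_gamma1 (γ1 γ2 K : ℝ) (hγ1 : 0 < γ1) (hγ2 : 0 < γ2)
    (hK : 1 ≤ K)
    (hγ1' : γ1 < Real.cosh 1 / Real.sinh 1)
    (hγ2' : K * (Real.cosh K / Real.sinh K) < γ2)
    (ω : ℝ → ℝ)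
    (hω : ∀ z : ℝ, ω z = ((γ2 - z) / (γ2 + z)) * ((z - γ1) / (z + γ1)))
    (z0 θ0 : ℝ) (hz0 : z0 = Real.sqrt (γ1 * γ2)) (hθ0 : θ0 = ω z0 / (2 + ω z0)) :
    θ0 < 1 / 3 ∧
      ∀ k : ℝ, 1 ≤ k → k ≤ K →
        |θ0 - (1 - θ0) * ω (k * (Real.cosh k / Real.sinh k))| ≤ θ0 := by
  set s := Real.sqrt γ1 with hs_def
  set t := Real.sqrt γ2 with ht_def
  have hs0 : 0 < s := Real.sqrt_pos.mpr hγ1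
  have ht0 : 0 < t := Real.sqrt_pos.mpr hγ2
  have hs2 : s ^ 2 = γ1 := Real.sq_sqrt hγ1.le
  have ht2 : t ^ 2 = γ2 := Real.sq_sqrt hγ2.le
  have hz0' : z0 = s * t := by
    rw [hz0, hs_def, ht_def, Real.sqrt_mul hγ1.le]
  -- the maximum value m = ω z0 = (t-s)²/(t+s)²
  set m : ℝ := (t - s)^2 / (t + s)^2 with hm_def
  have hst : 0 < t + s := by linarith
  have hm0 : 0 ≤ m := by positivity
  have hm1 : m < 1 := by
    rw [hm_def, div_lt_one (by positivity)]
    nlinarith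
  have hωz0 : ω z0 = m := by
    rw [hω, hz0', hm_def, ← hs2, ← ht2]
    field_simp
  -- key: for z in [γ1, γ2], 0 ≤ ω z ≤ m
  have hrange : ∀ z : ℝ, γ1 ≤ z → z ≤ γ2 → 0 ≤ ω z ∧ ω z ≤ m := by
    intro z h1 h2
    have hz0p : 0 < z := lt_of_lt_of_le hγ1 h1
    have hd1 : 0 < γ2 + z := by linarith
    have hd2 : 0 < z + γ1 := by linarith
    constructor
    · rw [hω]
      apply mul_nonneg
      · exact div_nonneg (by linarith) hd1.le
      · exact div_nonneg (by linarith) hd2.le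
    · rw [hω, hm_def, div_mul_div_comm, div_le_div_iff₀ (by positivity) (by positivity)]
      rw [← hs2, ← ht2] at *
      nlinarith [mul_nonneg (by positivity : (0:ℝ) ≤ 2 * (s^2 + t^2)) (sq_nonneg (z - s * t))]
  have h2m : (0:ℝ) < 2 + m := by linarith
  have hθ0' : θ0 * (2 + m) = m := by
    rw [hθ0, hωz0, div_mul_cancel₀ _ (ne_of_gt h2m)]
  have hθ0_nonneg : 0 ≤ θ0 := by
    rw [hθ0, hωz0]; positivity
  have hθ0_lt : θ0 < 1 / 3 := by nlinarith [hθ0', h2m, hm1]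
  refine ⟨hθ0_lt, ?_⟩
  intro k hk1 hkK
  set z := k * (Real.cosh k / Real.sinh k) with hz_def
  have hmono := kcoth_monotoneOn
  have hzeq : z = k * Real.cosh k / Real.sinh k := by rw [hz_def, mul_div_assoc]
  have hz_lo : Real.cosh 1 / Real.sinh 1 ≤ z := by
    have := hmono (Set.mem_Ici.mpr le_rfl) (Set.mem_Ici.mpr hk1) hk1
    simpa [hzeq, one_mul] using this
  have hz_hi : z ≤ K * Real.cosh K / Real.sinh K := by
    have := hmono (Set.mem_Ici.mpr hk1) (Set.mem_Ici.mpr (le_trans hk1 hkK)) hkK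
    simpa [hzeq] using this
  have hz1 : γ1 ≤ z := le_of_lt (lt_of_lt_of_le hγ1' hz_lo)
  have hz2 : z ≤ γ2 := by
    rw [mul_div_assoc] at hz_hi
    exact le_of_lt (lt_of_le_of_lt hz_hi hγ2')
  obtain ⟨hw0, hwm⟩ := hrange z hz1 hz2
  set w := ω z with hw_def
  have h1θ : (0:ℝ) < 1 - θ0 := by linarith
  have h2θ : (1 - θ0) * m = 2 * θ0 := by linear_combination -hθ0'
  have hA : (1 - θ0) * w ≤ 2 * θ0 := h2θ ▸ mul_le_mul_of_nonneg_left hwm h1θ.le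
  have hB : 0 ≤ (1 - θ0) * w := mul_nonneg h1θ.le hw0
  rw [abs_le]
  constructor <;> linarith
end

section
/- Let K ≥ 1 be a real number and suppose γ₁ > coth 1 and γ₂ > K·coth K, where coth x = cosh x / sinh x. Set ζ = (γ₁ − coth 1)/(γ₁ + coth 1) and w₀ = ω(z₀). Then for every real k with 1 ≤ k ≤ K: (i) if w₀ ≤ ζ, then |ω(k·coth k)| ≤ ζ (the convergence factor with θ = 0); (ii) if w₀ > ζ, then with θ = (w₀ − ζ)/(2 + w₀ − ζ) one has |θ − (1−θ)·ω(k·coth k)| ≤ (w₀ + ζ)/(2 + w₀ − ζ); moreover (w₀ + ζ)/(2 + w₀ − ζ) ≤ (1 + ζ)/(3 − ζ). -/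
/-!
The frequency enters only through `z = k coth k`, which is increasing in `k`, so for
`1 ≤ k ≤ K` it lies in `[coth 1, K coth K] ⊆ [coth 1, γ₂)`. On that interval `ω ≥ -ζ`, since the
first factor of `ω` lies in `[0, 1]` and the second is increasing and equals `-ζ` at `coth 1`;
and `ω ≤ ω(z₀) = w₀`, since `ω(z₀) - ω(z)` is a positive multiple of `(z - z₀)²`. Hence
`ω(k coth k) ∈ [-ζ, w₀]`. If `w₀ ≤ ζ` this is (i); otherwise `θ` is chosen so that
`w ↦ θ - (1 - θ) w` maps `[-ζ, w₀]` onto the symmetric interval of radius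
`(w₀ + ζ)/(2 + w₀ - ζ)`. Finally `w₀ = ((η - 1)/(η + 1))² ≤ 1`, which bounds that radius by
`(1 + ζ)/(3 - ζ)`.
-/

open Real Set

noncomputable def robinFactor (γ1 γ2 z : ℝ) : ℝ :=
  ((γ2 - z) / (γ2 + z)) * ((z - γ1) / (z + γ1))

theorem monotoneOn_mul_coth : MonotoneOn (fun x => x * (cosh x / sinh x)) (Ioi 0) := by
  have hderiv : ∀ x ∈ Ioi (0 : ℝ), HasDerivAt (fun x => x * (cosh x / sinh x))
      ((sinh x * cosh x - x) / sinh x ^ 2) x := by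
    intro x hx
    have hs : sinh x ≠ 0 := (sinh_pos_iff.2 hx).ne'
    refine ((hasDerivAt_id' x).mul ((hasDerivAt_cosh x).div (hasDerivAt_sinh x) hs)).congr_deriv ?_
    rw [Pi.div_apply]
    field_simp
    linear_combination (-x) * cosh_sq_sub_sinh_sq x
  refine monotoneOn_of_hasDerivWithinAt_nonneg (convex_Ioi 0)
    (fun x hx => (hderiv x hx).continuousAt.continuousWithinAt)
    (fun x hx => (hderiv x (interior_subset hx)).hasDerivWithinAt) fun x hx => ?_
  rw [interior_Ioi] at hx
  have h2x : 2 * x ≤ sinh (2 * x) := self_le_sinh_iff.2 (by linarith [mem_Ioi.1 hx])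
  rw [sinh_two_mul] at h2x
  exact div_nonneg (by linarith) (sq_nonneg _)

section RobinFactor

variable {γ1 γ2 : ℝ}

theorem robinFactor_sqrt_mul (h1 : 0 < γ1) (h2 : 0 < γ2) :
    robinFactor γ1 γ2 √(γ1 * γ2) = ((√γ2 - √γ1) / (√γ2 + √γ1)) ^ 2 := by
  obtain ⟨a, ha, rfl⟩ : ∃ a, 0 < a ∧ γ1 = a ^ 2 := ⟨√γ1, sqrt_pos.2 h1, (sq_sqrt h1.le).symm⟩
  obtain ⟨b, hb, rfl⟩ : ∃ b, 0 < b ∧ γ2 = b ^ 2 := ⟨√γ2, sqrt_pos.2 h2, (sq_sqrt h2.le).symm⟩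
  rw [sqrt_sq ha.le, sqrt_sq hb.le, ← mul_pow, sqrt_sq (by positivity), robinFactor]
  field_simp

theorem robinFactor_sqrt_mul_le_one (h1 : 0 < γ1) (h2 : 0 < γ2) :
    robinFactor γ1 γ2 √(γ1 * γ2) ≤ 1 := by
  have h1' := sqrt_pos.2 h1
  have h2' := sqrt_pos.2 h2
  rw [robinFactor_sqrt_mul h1 h2, sq_le_one_iff_abs_le_one, abs_div,
    abs_of_pos (add_pos h2' h1'), div_le_one (add_pos h2' h1'), abs_sub_le_iff]
  constructor <;> linarith

theorem robinFactor_le_sqrt_mul (h1 : 0 < γ1) (h2 : 0 < γ2) {z : ℝ} (hz : 0 ≤ z) :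
    robinFactor γ1 γ2 z ≤ robinFactor γ1 γ2 √(γ1 * γ2) := by
  set z0 := √(γ1 * γ2)
  have hz0 : 0 < z0 := sqrt_pos.2 (mul_pos h1 h2)
  have hz0sq : z0 ^ 2 = γ1 * γ2 := sq_sqrt (mul_pos h1 h2).le
  have hdiff : robinFactor γ1 γ2 z0 - robinFactor γ1 γ2 z =
      2 * (γ1 + γ2) * z0 * (z - z0) ^ 2 / ((γ2 + z) * (z + γ1) * ((γ2 + z0) * (z0 + γ1))) := by
    unfold robinFactor
    field_simp
    linear_combination (2 * (γ1 + γ2) * (z - z0)) * hz0sq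
  have : 0 ≤ robinFactor γ1 γ2 z0 - robinFactor γ1 γ2 z := by
    rw [hdiff]
    positivity
  linarith

theorem neg_div_le_robinFactor {c z : ℝ} (hc : 0 < c) (hcγ1 : c ≤ γ1) (hcz : c ≤ z)
    (hzγ2 : z ≤ γ2) : -((γ1 - c) / (γ1 + c)) ≤ robinFactor γ1 γ2 z := by
  have hfirst₀ : 0 ≤ (γ2 - z) / (γ2 + z) := div_nonneg (by linarith) (by linarith)
  have hfirst₁ : (γ2 - z) / (γ2 + z) ≤ 1 := (div_le_one (by linarith)).2 (by linarith)
  have hsecond : -((γ1 - c) / (γ1 + c)) ≤ (z - γ1) / (z + γ1) := by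
    rw [← neg_div, neg_sub, div_le_div_iff₀ (by linarith) (by linarith)]
    nlinarith
  rcases le_total 0 ((z - γ1) / (z + γ1)) with hsign | hsign
  · have : 0 ≤ (γ1 - c) / (γ1 + c) := div_nonneg (by linarith) (by linarith)
    have : 0 ≤ robinFactor γ1 γ2 z := mul_nonneg hfirst₀ hsign
    linarith
  · exact hsecond.trans (le_mul_of_le_one_left hsign hfirst₁)

end RobinFactor

theorem abs_relaxation_le {w w0 ζ : ℝ} (hlo : -ζ ≤ w) (hhi : w ≤ w0) (hpos : 0 < 2 + w0 - ζ) :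
    |(w0 - ζ) / (2 + w0 - ζ) - (1 - (w0 - ζ) / (2 + w0 - ζ)) * w| ≤
      (w0 + ζ) / (2 + w0 - ζ) := by
  have hrw : (w0 - ζ) / (2 + w0 - ζ) - (1 - (w0 - ζ) / (2 + w0 - ζ)) * w =
      (w0 - ζ - 2 * w) / (2 + w0 - ζ) := by
    field_simp
    ring
  rw [hrw, abs_div, abs_of_pos hpos]
  gcongr
  exact abs_le.2 ⟨by linarith, by linarith⟩

theorem relaxation_rate_le {w0 ζ : ℝ} (hw0 : w0 ≤ 1) (hζ : ζ < 1) (hpos : 0 < 2 + w0 - ζ) :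
    (w0 + ζ) / (2 + w0 - ζ) ≤ (1 + ζ) / (3 - ζ) := by
  rw [div_le_div_iff₀ hpos (by linarith)]
  nlinarith [mul_nonneg (sub_nonneg.2 hw0) (sub_nonneg.2 hζ.le)]

theorem vonNeumann_rate_large_gamma1_general (γ1 γ2 K : ℝ) (hγ1 : 0 < γ1) (hγ2 : 0 < γ2)
    (hγ1' : Real.cosh 1 / Real.sinh 1 < γ1)
    (hγ2' : K * (Real.cosh K / Real.sinh K) < γ2)
    (ω : ℝ → ℝ)
    (hω : ∀ z : ℝ, ω z = ((γ2 - z) / (γ2 + z)) * ((z - γ1) / (z + γ1)))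
    (z0 ζ w0 : ℝ) (hz0 : z0 = Real.sqrt (γ1 * γ2))
    (hζ : ζ = (γ1 - Real.cosh 1 / Real.sinh 1) / (γ1 + Real.cosh 1 / Real.sinh 1))
    (hw0 : w0 = ω z0) :
    (∀ k : ℝ, 1 ≤ k → k ≤ K →
        (w0 ≤ ζ → |ω (k * (Real.cosh k / Real.sinh k))| ≤ ζ) ∧
        (ζ < w0 →
          |(w0 - ζ) / (2 + w0 - ζ) -
              (1 - (w0 - ζ) / (2 + w0 - ζ)) * ω (k * (Real.cosh k / Real.sinh k))| ≤
            (w0 + ζ) / (2 + w0 - ζ))) ∧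
      (w0 + ζ) / (2 + w0 - ζ) ≤ (1 + ζ) / (3 - ζ) := by
  obtain rfl : ω = robinFactor γ1 γ2 := funext hω
  subst hz0 hζ hw0
  set c := cosh 1 / sinh 1
  have hc : 0 < c := div_pos (cosh_pos 1) (sinh_pos_iff.2 one_pos)
  have hζ1 : (γ1 - c) / (γ1 + c) < 1 := (div_lt_one (by linarith)).2 (by linarith)
  have hw0 : 0 ≤ robinFactor γ1 γ2 √(γ1 * γ2) := by
    rw [robinFactor_sqrt_mul hγ1 hγ2]
    positivity
  have hrange : ∀ k, 1 ≤ k → k ≤ K →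
      -((γ1 - c) / (γ1 + c)) ≤ robinFactor γ1 γ2 (k * (cosh k / sinh k)) ∧
        robinFactor γ1 γ2 (k * (cosh k / sinh k)) ≤ robinFactor γ1 γ2 √(γ1 * γ2) := by
    intro k hk1 hkK
    have hck : c ≤ k * (cosh k / sinh k) := by
      simpa using monotoneOn_mul_coth (mem_Ioi.2 one_pos) (by simp; linarith) hk1
    have hkγ2 : k * (cosh k / sinh k) ≤ γ2 :=
      (monotoneOn_mul_coth (by simp; linarith) (by simp; linarith) hkK).trans hγ2'.le
    exact ⟨neg_div_le_robinFactor hc hγ1'.le hck hkγ2,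
      robinFactor_le_sqrt_mul hγ1 hγ2 (hc.le.trans hck)⟩
  refine ⟨fun k hk1 hkK => ⟨fun hw0ζ => ?_, fun hζw0 => ?_⟩,
    relaxation_rate_le (robinFactor_sqrt_mul_le_one hγ1 hγ2) hζ1 (by linarith)⟩
  · obtain ⟨hlo, hhi⟩ := hrange k hk1 hkK
    exact abs_le.2 ⟨by linarith, by linarith⟩
  · obtain ⟨hlo, hhi⟩ := hrange k hk1 hkK
    exact abs_relaxation_le hlo hhi (by linarith)

/-- With `γ₁, γ₂ > 0`, `ω(z) = ((γ₂ - z)/(γ₂ + z))·((z - γ₁)/(z + γ₁))`,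
`z₀ = √(γ₁γ₂)`, `K ≥ 1`, `γ₁ > coth 1` and `γ₂ > K·coth K`
(where `coth x = cosh x / sinh x`), setting `ζ = (γ₁ - coth 1)/(γ₁ + coth 1)` and
`w₀ = ω(z₀)`: for every `1 ≤ k ≤ K`, (i) if `w₀ ≤ ζ` then `|ω(k·coth k)| ≤ ζ`,
(ii) if `w₀ > ζ` then with `θ = (w₀ - ζ)/(2 + w₀ - ζ)` one has
`|θ - (1-θ)·ω(k·coth k)| ≤ (w₀ + ζ)/(2 + w₀ - ζ)`; moreover
`(w₀ + ζ)/(2 + w₀ - ζ) ≤ (1 + ζ)/(3 - ζ)`. -/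
theorem vonNeumann_rate_large_gamma1 (γ1 γ2 K : ℝ) (hγ1 : 0 < γ1) (hγ2 : 0 < γ2)
    (hK : 1 ≤ K)
    (hγ1' : Real.cosh 1 / Real.sinh 1 < γ1)
    (hγ2' : K * (Real.cosh K / Real.sinh K) < γ2)
    (ω : ℝ → ℝ)
    (hω : ∀ z : ℝ, ω z = ((γ2 - z) / (γ2 + z)) * ((z - γ1) / (z + γ1)))
    (z0 ζ w0 : ℝ) (hz0 : z0 = Real.sqrt (γ1 * γ2))
    (hζ : ζ = (γ1 - Real.cosh 1 / Real.sinh 1) / (γ1 + Real.cosh 1 / Real.sinh 1))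
    (hw0 : w0 = ω z0) :
    (∀ k : ℝ, 1 ≤ k → k ≤ K →
        (w0 ≤ ζ → |ω (k * (Real.cosh k / Real.sinh k))| ≤ ζ) ∧
        (ζ < w0 →
          |(w0 - ζ) / (2 + w0 - ζ) -
              (1 - (w0 - ζ) / (2 + w0 - ζ)) * ω (k * (Real.cosh k / Real.sinh k))| ≤
            (w0 + ζ) / (2 + w0 - ζ))) ∧
      (w0 + ζ) / (2 + w0 - ζ) ≤ (1 + ζ) / (3 - ζ) :=
  vonNeumann_rate_large_gamma1_general γ1 γ2 K hγ1 hγ2 hγ1' hγ2' ω hω z0 ζ w0 hz0 hζ hw0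
end

section
/- For every j with 1 ≤ j ≤ 2n−2 one has 3a_{j+1} − b_{j+1} ≤ 3a_j − b_j; that is, the finite sequence j ↦ 3a_j − b_j, j = 1, …, 2n−1, is monotonically decreasing. -/
/-- `λ_j = 4 sin²(jπ/(4n))`. -/
noncomputable def lamRR (n j : ℕ) : ℝ :=
  4 * Real.sin ((j : ℝ) * Real.pi / (4 * (n : ℝ))) ^ 2

/-- `λ̃_j = (2/(n+1)) Σ_{i=1}^n sin²(inπ/(n+1)) / (4 sin²(iπ/(2(n+1))) + λ_j)`. -/
noncomputable def lamTildeRR (n j : ℕ) : ℝ :=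
  (2 / ((n : ℝ) + 1)) * ∑ i ∈ Finset.Icc 1 n,
    Real.sin ((i : ℝ) * (n : ℝ) * Real.pi / ((n : ℝ) + 1)) ^ 2 /
      (4 * Real.sin ((i : ℝ) * Real.pi / (2 * ((n : ℝ) + 1))) ^ 2 + lamRR n j)

/-- `a_j = (h - (h/6)λ_j) λ̃_j` with `h = 1/(2n)`. -/
noncomputable def aRR (n j : ℕ) : ℝ :=
  (1 / (2 * (n : ℝ)) - (1 / (2 * (n : ℝ))) / 6 * lamRR n j) * lamTildeRR n j

/-- `b_j = 1 - (1 + λ_j/2) λ̃_j`. -/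
noncomputable def bRR (n j : ℕ) : ℝ :=
  1 - (1 + lamRR n j / 2) * lamTildeRR n j

/-!
Write `h = 1/(2n)` and `μ_i = 4 sin²(iπ/(2(n+1)))`. Then `3a_j - b_j = C(λ_j) λ̃_j - 1` with
`C(λ) = 1 + 3h + (1-h)λ/2`, and `sin²(inπ/(n+1)) = μ_i μ_{n+1-i}/4` with `μ_i + μ_{n+1-i} = 4`.
Averaging the sum defining `λ̃` with its reflection `i ↦ n+1-i` writes `C(λ) λ̃(λ)` as a sum
with nonnegative weights of `C(λ) (1/(p+λ) + 1/(q+λ))` over pairs `p + q = 4`, and each of these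
is antitone for `λ > 0`. Since `λ_j` increases in `j` for `j ≤ 2n`, the claim follows.
-/

open Real Finset

lemma mul_one_div_add_one_div_antitone {p q h x y : ℝ} (hp : 0 ≤ p) (hq : 0 ≤ q) (hpq : p + q = 4)
    (hh : 0 ≤ h) (hx : 0 < x) (hxy : x ≤ y) :
    (1 + 3 * h + (1 - h) / 2 * y) * (1 / (p + y) + 1 / (q + y)) ≤
      (1 + 3 * h + (1 - h) / 2 * x) * (1 / (p + x) + 1 / (q + x)) := by
  have hy : 0 < y := hx.trans_le hxy
  rw [div_add_div _ _ (by positivity) (by positivity), div_add_div _ _ (by positivity) (by positivity),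
    mul_div_assoc', mul_div_assoc', div_le_div_iff₀ (by positivity) (by positivity)]
  -- With `u = x + 2`, `v = y + 2` and `r = (p - q)²/4`, the right side minus the left side is
  -- `2 (v - u) (r (u + v)/2 + h (pq (u + v)/2 + 2u(v - 1) + 2v(u - 1) + 4r))`.
  obtain rfl : q = 4 - p := by linarith
  have hd := sub_nonneg.2 hxy
  nlinarith [mul_nonneg (mul_nonneg hd (sq_nonneg (2 * p - 4))) (by positivity : 0 ≤ x + y + 4),
    mul_nonneg (mul_nonneg (mul_nonneg (mul_nonneg hd hh) hp) hq) (by positivity : 0 ≤ x + y + 4),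
    mul_nonneg (mul_nonneg hd hh) (by positivity : 0 ≤ (x + 2) * (y + 1)),
    mul_nonneg (mul_nonneg hd hh) (by positivity : 0 ≤ (y + 2) * (x + 1)),
    mul_nonneg (mul_nonneg hd hh) (sq_nonneg (2 * p - 4))]

lemma sum_Icc_one_reflect {M : Type*} [AddCommMonoid M] (f : ℕ → M) (n : ℕ) :
    ∑ i ∈ Icc 1 n, f (n + 1 - i) = ∑ i ∈ Icc 1 n, f i := by
  rw [← Ico_add_one_right_eq_Icc, sum_Ico_reflect f 1 (Nat.le_succ _),
    Nat.add_sub_cancel_left, Nat.add_sub_cancel]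

noncomputable def muRR (n i : ℕ) : ℝ :=
  4 * sin (i * π / (2 * (n + 1))) ^ 2

lemma muRR_nonneg (n i : ℕ) : 0 ≤ muRR n i := by
  unfold muRR; positivity

lemma muRR_add_muRR_reflect {n i : ℕ} (hi : i ≤ n + 1) : muRR n i + muRR n (n + 1 - i) = 4 := by
  have hangle : ((n + 1 - i : ℕ) : ℝ) * π / (2 * (n + 1)) = π / 2 - i * π / (2 * (n + 1)) := by
    rw [Nat.cast_sub hi]; push_cast; field_simp
  rw [muRR, muRR, hangle, sin_pi_div_two_sub]
  linear_combination 4 * sin_sq_add_cos_sq (i * π / (2 * (n + 1)))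

lemma sin_sq_eq_muRR_mul_muRR_reflect {n i : ℕ} (hi : i ≤ n + 1) :
    sin (i * n * π / (n + 1)) ^ 2 = muRR n i * muRR n (n + 1 - i) / 4 := by
  set θ : ℝ := i * π / (2 * (n + 1)) with hθ
  have hangle : (i : ℝ) * n * π / (n + 1) = i * π - 2 * θ := by rw [hθ]; field_simp; ring
  have hsign : ((-1 : ℝ) ^ i) ^ 2 = 1 := by rw [← pow_mul, mul_comm, pow_mul, neg_one_sq, one_pow]
  rw [show muRR n (n + 1 - i) = 4 - muRR n i by linarith [muRR_add_muRR_reflect hi],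
    hangle, sin_nat_mul_pi_sub, sin_two_mul, muRR, ← hθ]
  linear_combination (4 * sin θ ^ 2 * cos θ ^ 2) * hsign + 4 * sin θ ^ 2 * sin_sq_add_cos_sq θ

noncomputable def lamTildeFun (n : ℕ) (x : ℝ) : ℝ :=
  2 / (n + 1) * ∑ i ∈ Icc 1 n, sin (i * n * π / (n + 1)) ^ 2 / (muRR n i + x)

lemma lamTildeFun_eq_sum_pair (n : ℕ) (x : ℝ) :
    lamTildeFun n x = 1 / (n + 1) * ∑ i ∈ Icc 1 n, muRR n i * muRR n (n + 1 - i) / 4 *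
      (1 / (muRR n i + x) + 1 / (muRR n (n + 1 - i) + x)) := by
  set w : ℕ → ℝ := fun i => muRR n i * muRR n (n + 1 - i) / 4
  have hsum : ∑ i ∈ Icc 1 n, sin (i * n * π / (n + 1)) ^ 2 / (muRR n i + x)
      = ∑ i ∈ Icc 1 n, w i / (muRR n i + x) :=
    sum_congr rfl fun i hi => by rw [sin_sq_eq_muRR_mul_muRR_reflect (by simp at hi; omega)]
  have hreflect : ∑ i ∈ Icc 1 n, w i / (muRR n i + x) = ∑ i ∈ Icc 1 n, w i / (muRR n (n + 1 - i) + x) := by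
    rw [← sum_Icc_one_reflect]
    refine sum_congr rfl fun i hi => ?_
    simp only [w, Nat.sub_sub_self (by simp at hi; omega : i ≤ n + 1), mul_comm]
  rw [lamTildeFun, hsum, show (2 : ℝ) / (n + 1) = 1 / (n + 1) * 2 by ring, mul_assoc, two_mul]
  nth_rw 2 [hreflect]
  rw [← sum_add_distrib]
  congr 1
  exact sum_congr rfl fun i _ => by ring

lemma antitoneOn_mul_lamTildeFun (n : ℕ) {h : ℝ} (hh : 0 ≤ h) :
    AntitoneOn (fun x => (1 + 3 * h + (1 - h) / 2 * x) * lamTildeFun n x) (Set.Ioi (0 : ℝ)) := by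
  intro x hx y _ hxy
  simp only [lamTildeFun_eq_sum_pair, mul_sum]
  refine sum_le_sum fun i hi => ?_
  have hw : 0 ≤ 1 / ((n : ℝ) + 1) * (muRR n i * muRR n (n + 1 - i) / 4) := by
    have := muRR_nonneg n i; have := muRR_nonneg n (n + 1 - i); positivity
  have := mul_le_mul_of_nonneg_left (mul_one_div_add_one_div_antitone (muRR_nonneg n i) (muRR_nonneg n _)
    (muRR_add_muRR_reflect (by simp at hi; omega)) hh hx hxy) hw
  linarith

lemma lamRR_pos {n j : ℕ} (hj : 0 < j) (hjn : j < 4 * n) : 0 < lamRR n j := by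
  have hn : (0 : ℝ) < n := by exact_mod_cast (by omega : 0 < n)
  have hjn' : (j : ℝ) < 4 * n := by exact_mod_cast hjn
  have hsin : 0 < sin (j * π / (4 * n)) := by
    apply sin_pos_of_pos_of_lt_pi (by positivity)
    rw [div_lt_iff₀ (by positivity)]
    nlinarith [pi_pos]
  unfold lamRR; positivity

lemma lamRR_le_lamRR {n j k : ℕ} (hjk : j ≤ k) (hk : k ≤ 2 * n) : lamRR n j ≤ lamRR n k := by
  rcases Nat.eq_zero_or_pos n with rfl | hn
  · obtain rfl : k = 0 := by omega
    obtain rfl : j = 0 := by omega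
    rfl
  have hn' : (0 : ℝ) < 4 * n := by positivity
  have hjk' : (j : ℝ) ≤ k := by exact_mod_cast hjk
  have hk' : (k : ℝ) ≤ 2 * n := by exact_mod_cast hk
  have hsin : sin (j * π / (4 * n)) ≤ sin (k * π / (4 * n)) := by
    apply sin_le_sin_of_le_of_le_pi_div_two
    · linarith [show 0 ≤ (j : ℝ) * π / (4 * n) by positivity, pi_pos]
    · rw [div_le_iff₀ hn']; nlinarith [pi_pos]
    · gcongr
  unfold lamRR
  gcongr
  exact sin_nonneg_of_nonneg_of_le_pi (by positivity) (by rw [div_le_iff₀ hn']; nlinarith [pi_pos])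

lemma three_mul_aRR_sub_bRR (n j : ℕ) :
    3 * aRR n j - bRR n j =
      (1 + 3 * (1 / (2 * n)) + (1 - 1 / (2 * n)) / 2 * lamRR n j) * lamTildeFun n (lamRR n j) - 1 := by
  rw [aRR, bRR, show lamTildeRR n j = lamTildeFun n (lamRR n j) from rfl]
  ring

theorem three_a_sub_b_decreasing_general (n : ℕ)
    (j : ℕ) (hj1 : 1 ≤ j) (hj2 : j ≤ 2 * n - 2) :
    3 * aRR n (j + 1) - bRR n (j + 1) ≤ 3 * aRR n j - bRR n j := by
  rw [three_mul_aRR_sub_bRR, three_mul_aRR_sub_bRR, sub_le_sub_iff_right]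
  exact antitoneOn_mul_lamTildeFun n (by positivity) (lamRR_pos hj1 (by omega))
    (lamRR_pos (by omega) (by omega)) (lamRR_le_lamRR j.le_succ (by omega))

/-- the finite sequence `j ↦ 3a_j - b_j`, `j = 1, …, 2n-1`, is
monotonically decreasing. -/
theorem three_a_sub_b_decreasing (n : ℕ) (hn : 1 ≤ n)
    (j : ℕ) (hj1 : 1 ≤ j) (hj2 : j ≤ 2 * n - 2) :
    3 * aRR n (j + 1) - bRR n (j + 1) ≤ 3 * aRR n j - bRR n j :=
  three_a_sub_b_decreasing_general n j hj1 hj2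
end

section
/- If n ≥ 11, then 3a₁ − b₁ < −0.049·h, and in particular 3a₁ − b₁ < −7h²/16. -/
/-!
Write `s_i = sin²(iπ/(2(n+1)))`. The numerator of the `i`-th term of `λ̃_j` is `4 s_i (1 - s_i)`,
and `s_i + s_{n+1-i} = 1`, so `(n + 1) λ̃_j = n - 2 D_j` with
`D_j = Σ_i λ_j (1 - s_i) / (4 s_i + λ_j) ≥ 0`. Since `|sin (k x)| ≤ k |sin x|`, `s_i ≤ i² λ_1`,
so the `i`-th term of `D_1` is at least `(1 - i² λ_1) / (4 i² + 1)`; as `λ_1 ≤ π² / (4 n²)` is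
small, the first four terms already give `D_1 ≥ 0.28`. Finally
`3 a₁ - b₁ = λ̃_1 (1 + 3h + λ_1 (1 - h) / 2) - 1`, and the claim reduces to a cubic inequality
in `n`.
-/

open Real Finset

namespace RobinRobin

theorem abs_sin_nat_mul_le (k : ℕ) (x : ℝ) : |sin (k * x)| ≤ k * |sin x| := by
  induction k with
  | zero => simp
  | succ k ih =>
    have hsplit : |sin ((k + 1 : ℕ) * x)| ≤ |sin (k * x)| + |sin x| := by
      rw [Nat.cast_succ, add_mul, one_mul, sin_add]
      calc |sin (k * x) * cos x + cos (k * x) * sin x|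
          ≤ |sin (k * x)| * |cos x| + |cos (k * x)| * |sin x| := by
            simpa only [abs_mul] using abs_add_le (sin (k * x) * cos x) (cos (k * x) * sin x)
        _ ≤ |sin (k * x)| * 1 + 1 * |sin x| := by
            gcongr
            exacts [abs_cos_le_one _, abs_cos_le_one _]
        _ = _ := by ring
    push_cast at hsplit ⊢
    linarith

theorem sin_sq_nat_mul_le (k : ℕ) (x : ℝ) : sin (k * x) ^ 2 ≤ k ^ 2 * sin x ^ 2 := by
  rw [← sq_abs, ← sq_abs (sin x), ← mul_pow]
  exact pow_le_pow_left₀ (abs_nonneg _) (abs_sin_nat_mul_le k x) 2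

theorem sin_sq_nat_mul_pi_sub (k : ℕ) (x : ℝ) : sin (k * π - x) ^ 2 = sin x ^ 2 := by
  rw [sin_nat_mul_pi_sub, neg_sq, mul_pow, ← pow_mul, pow_mul', neg_one_sq, one_pow, one_mul]

/-- `4 * sinSqGrid n i` is the `i`-th eigenvalue of the discrete Dirichlet Laplacian
`tridiag(-1, 2, -1)` of size `n`. -/
noncomputable def sinSqGrid (n i : ℕ) : ℝ :=
  sin (i * π / (2 * (n + 1))) ^ 2

theorem sinSqGrid_nonneg (n i : ℕ) : 0 ≤ sinSqGrid n i := sq_nonneg _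

theorem sinSqGrid_le_one (n i : ℕ) : sinSqGrid n i ≤ 1 := sin_sq_le_one _

theorem sinSqGrid_add_reflect {n i : ℕ} (hi : i ≤ n + 1) :
    sinSqGrid n i + sinSqGrid n (n + 1 - i) = 1 := by
  have hangle : ((n + 1 - i : ℕ) : ℝ) * π / (2 * (n + 1)) = π / 2 - i * π / (2 * (n + 1)) := by
    rw [Nat.cast_sub hi]
    field_simp
    push_cast
    ring
  rw [sinSqGrid, sinSqGrid, hangle, sin_pi_div_two_sub, sin_sq_add_cos_sq]

theorem sum_sinSqGrid (n : ℕ) : ∑ i ∈ Icc 1 n, sinSqGrid n i = n / 2 := by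
  have hreflect : ∑ i ∈ Icc 1 n, sinSqGrid n (n + 1 - i) = ∑ i ∈ Icc 1 n, sinSqGrid n i :=
    sum_nbij' (fun i ↦ n + 1 - i) (fun i ↦ n + 1 - i) (by simp; omega) (by simp; omega)
      (by simp; omega) (by simp; omega) (fun _ _ ↦ rfl)
  have hpairs : ∑ i ∈ Icc 1 n, (sinSqGrid n i + sinSqGrid n (n + 1 - i)) = n := by
    rw [sum_congr rfl fun i hi ↦ sinSqGrid_add_reflect (by simp at hi; omega)]
    simp
  rw [sum_add_distrib, hreflect] at hpairs
  linarith

theorem sin_sq_mul_pi_div_succ_eq (n i : ℕ) :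
    sin (i * n * π / (n + 1)) ^ 2 = 4 * sinSqGrid n i * (1 - sinSqGrid n i) := by
  have hangle : (i : ℝ) * n * π / (n + 1) = i * π - 2 * (i * π / (2 * (n + 1))) := by
    field_simp
    ring
  rw [hangle, sin_sq_nat_mul_pi_sub, sin_two_mul, sinSqGrid, ← cos_sq']
  ring

noncomputable def lamTildeDefect (n j : ℕ) : ℝ :=
  ∑ i ∈ Icc 1 n, lamRR n j * (1 - sinSqGrid n i) / (4 * sinSqGrid n i + lamRR n j)

theorem lamTildeRR_eq {n j : ℕ} (hlam : 0 < lamRR n j) :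
    lamTildeRR n j = (n - 2 * lamTildeDefect n j) / (n + 1) := by
  have hterm : ∀ i ∈ Icc 1 n,
      sin (i * n * π / (n + 1)) ^ 2 / (4 * sin (i * π / (2 * (n + 1))) ^ 2 + lamRR n j) =
        (1 - sinSqGrid n i) -
          lamRR n j * (1 - sinSqGrid n i) / (4 * sinSqGrid n i + lamRR n j) := by
    intro i _
    have hpos : 0 < 4 * sinSqGrid n i + lamRR n j := by
      linarith [sinSqGrid_nonneg n i]
    rw [sin_sq_mul_pi_div_succ_eq, ← sinSqGrid]
    field_simp
    ring
  rw [lamTildeRR, sum_congr rfl hterm, sum_sub_distrib, sum_sub_distrib, sum_sinSqGrid,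
    ← lamTildeDefect]
  simp only [sum_const, Nat.card_Icc, Nat.add_sub_cancel, nsmul_eq_mul, mul_one]
  field_simp
  ring

theorem lamRR_one_pos {n : ℕ} (hn : 0 < n) : 0 < lamRR n 1 := by
  have hx : 0 < π / (4 * n) := by positivity
  have hsin : 0 < sin (π / (4 * n)) :=
    sin_pos_of_pos_of_lt_pi hx (by
      rw [div_lt_iff₀ (by positivity)]
      nlinarith [pi_pos, (by exact_mod_cast hn : (1 : ℝ) ≤ n)])
  rw [lamRR, Nat.cast_one, one_mul]
  positivity

theorem lamRR_one_le (n : ℕ) : lamRR n 1 ≤ π ^ 2 / (4 * n ^ 2) := by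
  have h := sin_sq_le_sq (x := π / (4 * n))
  rw [div_pow] at h
  rw [lamRR, Nat.cast_one, one_mul]
  calc 4 * sin (π / (4 * n)) ^ 2 ≤ 4 * (π ^ 2 / (4 * n) ^ 2) := by gcongr
    _ = π ^ 2 / (4 * n ^ 2) := by ring

theorem sinSqGrid_le_sq_mul_lamRR {n : ℕ} (hn : 0 < n) (i : ℕ) :
    sinSqGrid n i ≤ i ^ 2 * lamRR n 1 := by
  have hn' : (1 : ℝ) ≤ n := by exact_mod_cast hn
  have hstep : sin (π / (2 * (n + 1))) ≤ sin (2 * (π / (4 * n))) := by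
    apply sin_le_sin_of_le_of_le_pi_div_two
    · have : 0 ≤ π / (2 * (n + 1)) := by positivity
      linarith [pi_pos]
    · rw [mul_div_assoc', div_le_div_iff₀ (by positivity) (by positivity)]
      nlinarith [pi_pos]
    · rw [mul_div_assoc', div_le_div_iff₀ (by positivity) (by positivity)]
      nlinarith [pi_pos]
  have hnonneg : 0 ≤ sin (π / (2 * (n + 1))) :=
    sin_nonneg_of_nonneg_of_le_pi (by positivity) (by
      rw [div_le_iff₀ (by positivity)]
      nlinarith [pi_pos])
  calc sinSqGrid n i = sin (i * (π / (2 * (n + 1)))) ^ 2 := by rw [sinSqGrid, mul_div_assoc]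
    _ ≤ i ^ 2 * sin (π / (2 * (n + 1))) ^ 2 := sin_sq_nat_mul_le i _
    _ ≤ i ^ 2 * sin (2 * (π / (4 * n))) ^ 2 := by gcongr
    _ ≤ i ^ 2 * (2 ^ 2 * sin (π / (4 * n)) ^ 2) := by
        gcongr
        exact_mod_cast sin_sq_nat_mul_le 2 (π / (4 * n))
    _ = i ^ 2 * lamRR n 1 := by rw [lamRR, Nat.cast_one, one_mul]; ring

theorem one_sub_mul_div_le_mul_one_sub_div {s k L : ℝ} (hL : 0 < L) (hs : 0 ≤ s)
    (hsk : s ≤ k * L) :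
    (1 - k * L) / (4 * k + 1) ≤ L * (1 - s) / (4 * s + L) := by
  have hk : 0 ≤ k := nonneg_of_mul_nonneg_left (hs.trans hsk) hL
  rw [div_le_div_iff₀ (by positivity) (by positivity)]
  nlinarith [mul_nonneg hs hk, mul_nonneg (sub_nonneg.2 hsk) hk,
    mul_nonneg (sub_nonneg.2 hsk) hL.le]

theorem sum_le_lamTildeDefect {n m : ℕ} (hn : 0 < n) (hm : m ≤ n) :
    ∑ i ∈ Icc 1 m, (1 - i ^ 2 * lamRR n 1) / (4 * i ^ 2 + 1) ≤ lamTildeDefect n 1 := by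
  have hL := lamRR_one_pos hn
  calc ∑ i ∈ Icc 1 m, (1 - i ^ 2 * lamRR n 1) / (4 * i ^ 2 + 1)
      ≤ ∑ i ∈ Icc 1 m, lamRR n 1 * (1 - sinSqGrid n i) / (4 * sinSqGrid n i + lamRR n 1) :=
        sum_le_sum fun i _ ↦
          one_sub_mul_div_le_mul_one_sub_div hL (sinSqGrid_nonneg n i)
            (sinSqGrid_le_sq_mul_lamRR hn i)
    _ ≤ lamTildeDefect n 1 :=
        sum_le_sum_of_subset_of_nonneg (Icc_subset_Icc_right hm) fun i _ _ ↦
          div_nonneg (mul_nonneg hL.le (sub_nonneg.2 (sinSqGrid_le_one n i)))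
            (by linarith [sinSqGrid_nonneg n i])

theorem pi_sq_lt : π ^ 2 < 9.9225 := by nlinarith [pi_lt_d2, pi_pos]

theorem three_mul_aRR_sub_bRR (n j : ℕ) :
    3 * aRR n j - bRR n j =
      lamTildeRR n j * (1 + 3 / (2 * n) + lamRR n j / 2 * (1 - 1 / (2 * n))) - 1 := by
  rw [aRR, bRR]
  ring

theorem lamTildeDefect_one_ge {n : ℕ} (hn : 11 ≤ n) : 0.28 ≤ lamTildeDefect n 1 := by
  have hx : (11 : ℝ) ≤ n := by exact_mod_cast hn
  have hL : lamRR n 1 ≤ 0.0206 := by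
    refine (lamRR_one_le n).trans ?_
    rw [div_le_iff₀ (by positivity)]
    nlinarith [pi_sq_lt]
  refine le_trans ?_ (sum_le_lamTildeDefect (m := 4) (by omega) (by omega))
  simp only [sum_Icc_succ_top, Icc_self, sum_singleton, Nat.reduceLeDiff]
  norm_num
  linarith

theorem three_mul_aRR_one_sub_bRR_one_lt {n : ℕ} (hn : 11 ≤ n) :
    3 * aRR n 1 - bRR n 1 < -0.049 / (2 * n) := by
  have hx : (11 : ℝ) ≤ n := by exact_mod_cast hn
  have hL := lamRR_one_pos (by omega : 0 < n)
  have hLle := lamRR_one_le n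
  have hD := lamTildeDefect_one_ge hn
  rw [three_mul_aRR_sub_bRR, lamTildeRR_eq hL]
  have hT : ((n : ℝ) - 2 * lamTildeDefect n 1) / (n + 1) ≤ (n - 0.56) / (n + 1) := by
    gcongr
    linarith
  have hM : 1 + 3 / (2 * n) + lamRR n 1 / 2 * (1 - 1 / (2 * n)) ≤
      1 + 3 / (2 * n) + π ^ 2 / (8 * n ^ 2) := by
    have : 0 ≤ 1 / (2 * (n : ℝ)) := by positivity
    have : π ^ 2 / (8 * n ^ 2) = π ^ 2 / (4 * n ^ 2) / 2 := by ring
    nlinarith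
  have hM0 : 0 ≤ 1 + 3 / (2 * n) + lamRR n 1 / 2 * (1 - 1 / (2 * n)) := by
    have : 1 / (2 * (n : ℝ)) ≤ 1 := by
      rw [div_le_one (by positivity)]
      linarith
    have : 0 ≤ 3 / (2 * (n : ℝ)) := by positivity
    nlinarith
  calc _ ≤ (n - 0.56) / (n + 1) * (1 + 3 / (2 * n) + π ^ 2 / (8 * n ^ 2)) - 1 := by
        gcongr
        exact div_nonneg (by linarith) (by linarith)
    _ < -0.049 / (2 * n) := by
        have hcubic : ((n : ℝ) - 0.56) * (8 * n ^ 2 + 12 * n + π ^ 2) <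
            4 * n * (n + 1) * (2 * n - 0.049) := by
          nlinarith [mul_le_mul_of_nonneg_left pi_sq_lt.le (by linarith : (0 : ℝ) ≤ n - 0.56)]
        rw [sub_lt_iff_lt_add, div_mul_eq_mul_div, div_lt_iff₀ (by positivity)]
        field_simp
        nlinarith

end RobinRobin

/-- if `n ≥ 11` (with `h = 1/(2n)`), then `3a₁ - b₁ < -0.049 h`, and
in particular `3a₁ - b₁ < -7h²/16`. -/
theorem three_a1_sub_b1_bound (n : ℕ) (hn : 11 ≤ n) (h : ℝ)
    (hh : h = 1 / (2 * (n : ℝ))) :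
    3 * aRR n 1 - bRR n 1 < -0.049 * h ∧
      3 * aRR n 1 - bRR n 1 < -7 * h ^ 2 / 16 := by
  have hlt : 3 * aRR n 1 - bRR n 1 < -0.049 * h := by
    rw [hh, mul_one_div]
    exact RobinRobin.three_mul_aRR_one_sub_bRR_one_lt hn
  have hpos : 0 < h := by rw [hh]; positivity
  have hsmall : h ≤ 1 / 22 := by
    rw [hh, div_le_div_iff₀ (by positivity) (by norm_num)]
    have : (11 : ℝ) ≤ n := by exact_mod_cast hn
    linarith
  exact ⟨hlt, by nlinarith⟩
end

section
/- For every j with 1 ≤ j ≤ 2n−1 one has 1/8 < λ̃_j < n/(n+1) < 1. -/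
open Real Finset

/-- Telescoping identity for cosine sums. -/
lemma telesc (x : ℝ) (n : ℕ) :
    ∑ i ∈ Finset.range n, 2 * Real.sin x * Real.cos (2 * ((i : ℝ) + 1) * x)
      = Real.sin ((2 * (n : ℝ) + 1) * x) - Real.sin x := by
  have h : ∀ i : ℕ, 2 * Real.sin x * Real.cos (2 * ((i : ℝ) + 1) * x)
      = Real.sin ((2 * ((i : ℝ) + 1) + 1) * x) - Real.sin ((2 * (i : ℝ) + 1) * x) := by
    intro i
    rw [Real.sin_sub_sin]
    ring_nf
  calc ∑ i ∈ Finset.range n, 2 * Real.sin x * Real.cos (2 * ((i : ℝ) + 1) * x)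
      = ∑ i ∈ Finset.range n,
        ((fun k : ℕ => Real.sin ((2 * (k : ℝ) + 1) * x)) (i + 1)
          - (fun k : ℕ => Real.sin ((2 * (k : ℝ) + 1) * x)) i) := by
        apply Finset.sum_congr rfl; intro i _
        simp only [h i]; push_cast; ring_nf
    _ = _ := by
        rw [Finset.sum_range_sub (fun k : ℕ => Real.sin ((2 * (k : ℝ) + 1) * x))]
        norm_num

lemma sum_cos2 (n : ℕ) (hn : 1 ≤ n) :
    ∑ i ∈ Finset.Icc 1 n, Real.cos (2 * (i : ℝ) * Real.pi / ((n : ℝ) + 1)) = -1 := by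
  have hn' : (1 : ℝ) ≤ (n : ℝ) := by exact_mod_cast hn
  set x : ℝ := Real.pi / ((n : ℝ) + 1) with hxdef
  have hn1 : (0 : ℝ) < (n : ℝ) + 1 := by positivity
  have hxpos : 0 < x := by positivity
  have hxlt : x < Real.pi := by
    rw [hxdef, div_lt_iff₀ hn1]
    nlinarith [Real.pi_pos]
  have hsin : 0 < Real.sin x := Real.sin_pos_of_pos_of_lt_pi hxpos hxlt
  have key : (2 * Real.sin x) * ∑ i ∈ Finset.range n, Real.cos (2 * ((i : ℝ) + 1) * x)
      = (2 * Real.sin x) * (-1) := by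
    rw [Finset.mul_sum, telesc]
    have h1 : (2 * (n : ℝ) + 1) * x = 2 * Real.pi - x := by
      rw [hxdef]; field_simp; ring
    rw [h1, Real.sin_sub, Real.sin_two_pi, Real.cos_two_pi]; ring
  have key2 : ∑ i ∈ Finset.range n, Real.cos (2 * ((i : ℝ) + 1) * x) = -1 :=
    mul_left_cancel₀ (by positivity) key
  rw [show Finset.Icc 1 n = Finset.Ico 1 (n + 1) by rfl, Finset.sum_Ico_eq_sum_range]
  simp only [Nat.add_sub_cancel]
  rw [← key2]
  apply Finset.sum_congr rfl
  intro i _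
  congr 1
  rw [hxdef]
  push_cast
  ring

lemma sum_cos1 (n : ℕ) (hn : 1 ≤ n) :
    ∑ i ∈ Finset.Icc 1 n, Real.cos ((i : ℝ) * Real.pi / ((n : ℝ) + 1)) = 0 := by
  have hn' : (1 : ℝ) ≤ (n : ℝ) := by exact_mod_cast hn
  set x : ℝ := Real.pi / (2 * ((n : ℝ) + 1)) with hxdef
  have hn1 : (0 : ℝ) < (n : ℝ) + 1 := by positivity
  have hxpos : 0 < x := by positivity
  have hxlt : x < Real.pi := by
    rw [hxdef, div_lt_iff₀ (by positivity)]
    nlinarith [Real.pi_pos]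
  have hsin : 0 < Real.sin x := Real.sin_pos_of_pos_of_lt_pi hxpos hxlt
  have key : (2 * Real.sin x) * ∑ i ∈ Finset.range n, Real.cos (2 * ((i : ℝ) + 1) * x)
      = (2 * Real.sin x) * 0 := by
    rw [Finset.mul_sum, telesc]
    have h1 : (2 * (n : ℝ) + 1) * x = Real.pi - x := by
      rw [hxdef]; field_simp; ring
    rw [h1, Real.sin_pi_sub]; ring
  have key2 : ∑ i ∈ Finset.range n, Real.cos (2 * ((i : ℝ) + 1) * x) = 0 :=
    mul_left_cancel₀ (by positivity) key
  rw [show Finset.Icc 1 n = Finset.Ico 1 (n + 1) by rfl, Finset.sum_Ico_eq_sum_range]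
  simp only [Nat.add_sub_cancel]
  rw [← key2]
  apply Finset.sum_congr rfl
  intro i _
  congr 1
  rw [hxdef]
  push_cast
  field_simp
  ring

lemma sum_sin_sq (n : ℕ) (hn : 1 ≤ n) :
    ∑ i ∈ Finset.Icc 1 n, Real.sin ((i : ℝ) * Real.pi / ((n : ℝ) + 1)) ^ 2
      = ((n : ℝ) + 1) / 2 := by
  have h : ∀ i ∈ Finset.Icc 1 n, Real.sin ((i : ℝ) * Real.pi / ((n : ℝ) + 1)) ^ 2
      = 1 / 2 - Real.cos (2 * (i : ℝ) * Real.pi / ((n : ℝ) + 1)) / 2 := by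
    intro i _
    rw [Real.sin_sq_eq_half_sub]
    congr 2
    ring
  rw [Finset.sum_congr rfl h, Finset.sum_sub_distrib, ← Finset.sum_div, ← Finset.sum_div,
    sum_cos2 n hn, Finset.sum_const, Nat.card_Icc, Nat.add_sub_cancel, nsmul_eq_mul]
  ring

lemma sum_cos_sq (n : ℕ) (hn : 1 ≤ n) :
    ∑ i ∈ Finset.Icc 1 n, Real.cos ((i : ℝ) * Real.pi / (2 * ((n : ℝ) + 1))) ^ 2
      = (n : ℝ) / 2 := by
  have h : ∀ i ∈ Finset.Icc 1 n, Real.cos ((i : ℝ) * Real.pi / (2 * ((n : ℝ) + 1))) ^ 2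
      = 1 / 2 + Real.cos ((i : ℝ) * Real.pi / ((n : ℝ) + 1)) / 2 := by
    intro i _
    rw [Real.cos_sq]
    have h2 : 2 * ((i : ℝ) * Real.pi / (2 * ((n : ℝ) + 1)))
        = (i : ℝ) * Real.pi / ((n : ℝ) + 1) := by
      field_simp
    rw [h2]
  rw [Finset.sum_congr rfl h, Finset.sum_add_distrib, ← Finset.sum_div, ← Finset.sum_div,
    sum_cos1 n hn, Finset.sum_const, Nat.card_Icc, Nat.add_sub_cancel, nsmul_eq_mul]
  ring



/-- for every `1 ≤ j ≤ 2n-1`, `1/8 < λ̃_j < n/(n+1) < 1`. -/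
theorem lamTilde_bounds (n : ℕ) (hn : 1 ≤ n)
    (j : ℕ) (hj1 : 1 ≤ j) (hj2 : j ≤ 2 * n - 1) :
    1 / 8 < lamTildeRR n j ∧ lamTildeRR n j < (n : ℝ) / ((n : ℝ) + 1) ∧
      (n : ℝ) / ((n : ℝ) + 1) < 1 := by
  have hn' : (1 : ℝ) ≤ (n : ℝ) := by exact_mod_cast hn
  have hn1 : (0 : ℝ) < (n : ℝ) + 1 := by positivity
  have hj1' : (1 : ℝ) ≤ (j : ℝ) := by exact_mod_cast hj1
  have hj2' : (j : ℝ) ≤ 2 * (n : ℝ) - 1 := by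
    have h : j + 1 ≤ 2 * n := by omega
    have h' : (j : ℝ) + 1 ≤ 2 * (n : ℝ) := by exact_mod_cast h
    linarith
  have hpi := Real.pi_pos
  -- bounds on λ_j
  set α : ℝ := (j : ℝ) * Real.pi / (4 * (n : ℝ)) with hαdef
  have hα0 : 0 < α := by positivity
  have hαlt : α < Real.pi / 2 := by
    rw [hαdef, div_lt_div_iff₀ (by positivity) (by norm_num)]
    nlinarith
  have hcosα : 0 < Real.cos α :=
    Real.cos_pos_of_mem_Ioo ⟨by linarith, hαlt⟩
  have hsinα : 0 < Real.sin α :=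
    Real.sin_pos_of_pos_of_lt_pi hα0 (by linarith)
  have hlampos : 0 < lamRR n j := by
    rw [lamRR]; positivity
  have hlamlt : lamRR n j < 4 := by
    rw [lamRR]
    have := Real.sin_sq_add_cos_sq α
    nlinarith
  -- per-term bounds
  have hterm : ∀ i ∈ Finset.Icc 1 n,
      Real.sin ((i : ℝ) * Real.pi / ((n : ℝ) + 1)) ^ 2 / 8 <
        Real.sin ((i : ℝ) * (n : ℝ) * Real.pi / ((n : ℝ) + 1)) ^ 2 /
          (4 * Real.sin ((i : ℝ) * Real.pi / (2 * ((n : ℝ) + 1))) ^ 2 + lamRR n j) ∧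
      Real.sin ((i : ℝ) * (n : ℝ) * Real.pi / ((n : ℝ) + 1)) ^ 2 /
          (4 * Real.sin ((i : ℝ) * Real.pi / (2 * ((n : ℝ) + 1))) ^ 2 + lamRR n j) <
        Real.cos ((i : ℝ) * Real.pi / (2 * ((n : ℝ) + 1))) ^ 2 := by
    intro i hi
    obtain ⟨hi1, hi2⟩ := Finset.mem_Icc.mp hi
    have hi1' : (1 : ℝ) ≤ (i : ℝ) := by exact_mod_cast hi1
    have hi2' : (i : ℝ) ≤ (n : ℝ) := by exact_mod_cast hi2
    set θ : ℝ := (i : ℝ) * Real.pi / (2 * ((n : ℝ) + 1)) with hθdef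
    have hθ0 : 0 < θ := by positivity
    have hθlt : θ < Real.pi / 2 := by
      rw [hθdef, div_lt_div_iff₀ (by positivity) (by norm_num)]
      nlinarith
    have hsθ : 0 < Real.sin θ := Real.sin_pos_of_pos_of_lt_pi hθ0 (by linarith)
    have hcθ : 0 < Real.cos θ := Real.cos_pos_of_mem_Ioo ⟨by linarith, hθlt⟩
    have h2θ : (i : ℝ) * Real.pi / ((n : ℝ) + 1) = 2 * θ := by
      rw [hθdef]; field_simp
    -- numerator identity
    have hnum : Real.sin ((i : ℝ) * (n : ℝ) * Real.pi / ((n : ℝ) + 1)) ^ 2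
        = Real.sin (2 * θ) ^ 2 := by
      have harg : (i : ℝ) * (n : ℝ) * Real.pi / ((n : ℝ) + 1)
          = (i : ℝ) * Real.pi - 2 * θ := by
        rw [hθdef]; field_simp; ring
      rw [harg, Real.sin_nat_mul_pi_sub, neg_sq, mul_pow, ← pow_mul, mul_comm i 2,
        pow_mul]
      norm_num
    have hsin2θ : Real.sin (2 * θ) ^ 2 = 4 * Real.sin θ ^ 2 * Real.cos θ ^ 2 := by
      rw [Real.sin_two_mul]; ring
    have hN : 0 < Real.sin (2 * θ) ^ 2 := by
      rw [hsin2θ]; positivity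
    have hD0 : 0 < 4 * Real.sin θ ^ 2 + lamRR n j := by linarith [sq_nonneg (Real.sin θ), hlampos]
    have hsq1 : Real.sin θ ^ 2 ≤ 1 := by
      have h := Real.sin_sq_add_cos_sq θ
      linarith [sq_nonneg (Real.cos θ)]
    have hD8 : 4 * Real.sin θ ^ 2 + lamRR n j < 8 := by linarith [hsq1, hlamlt]
    constructor
    · rw [hnum, h2θ]
      exact div_lt_div_of_pos_left hN hD0 hD8
    · rw [hnum]
      have hlt : Real.sin (2 * θ) ^ 2 / (4 * Real.sin θ ^ 2 + lamRR n j)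
          < Real.sin (2 * θ) ^ 2 / (4 * Real.sin θ ^ 2) :=
        div_lt_div_of_pos_left hN (by positivity) (by linarith)
      have heq : Real.sin (2 * θ) ^ 2 / (4 * Real.sin θ ^ 2) = Real.cos θ ^ 2 := by
        rw [hsin2θ]; field_simp
      linarith [hlt, heq ▸ hlt]
  have hne : (Finset.Icc 1 n).Nonempty := ⟨1, Finset.mem_Icc.mpr ⟨le_refl 1, hn⟩⟩
  have hlow : (((n : ℝ) + 1) / 2) / 8 <
      ∑ i ∈ Finset.Icc 1 n,
        Real.sin ((i : ℝ) * (n : ℝ) * Real.pi / ((n : ℝ) + 1)) ^ 2 /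
          (4 * Real.sin ((i : ℝ) * Real.pi / (2 * ((n : ℝ) + 1))) ^ 2 + lamRR n j) := by
    have := Finset.sum_lt_sum_of_nonempty hne (fun i hi => (hterm i hi).1)
    calc (((n : ℝ) + 1) / 2) / 8
        = ∑ i ∈ Finset.Icc 1 n, Real.sin ((i : ℝ) * Real.pi / ((n : ℝ) + 1)) ^ 2 / 8 := by
          rw [← Finset.sum_div, sum_sin_sq n hn]
      _ < _ := this
  have hhigh : (∑ i ∈ Finset.Icc 1 n,
        Real.sin ((i : ℝ) * (n : ℝ) * Real.pi / ((n : ℝ) + 1)) ^ 2 /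
          (4 * Real.sin ((i : ℝ) * Real.pi / (2 * ((n : ℝ) + 1))) ^ 2 + lamRR n j))
      < (n : ℝ) / 2 := by
    have := Finset.sum_lt_sum_of_nonempty hne (fun i hi => (hterm i hi).2)
    calc _ < ∑ i ∈ Finset.Icc 1 n,
          Real.cos ((i : ℝ) * Real.pi / (2 * ((n : ℝ) + 1))) ^ 2 := this
      _ = (n : ℝ) / 2 := sum_cos_sq n hn
  have hc : 0 < 2 / ((n : ℝ) + 1) := by positivity
  refine ⟨?_, ?_, ?_⟩
  · rw [lamTildeRR]
    have h1 := mul_lt_mul_of_pos_left hlow hc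
    have h2 : 2 / ((n : ℝ) + 1) * ((((n : ℝ) + 1) / 2) / 8) = 1 / 8 := by
      field_simp
    linarith
  · rw [lamTildeRR]
    have h1 := mul_lt_mul_of_pos_left hhigh hc
    have h2 : 2 / ((n : ℝ) + 1) * ((n : ℝ) / 2) = (n : ℝ) / ((n : ℝ) + 1) := by
      field_simp
    linarith
  · rw [div_lt_one hn1]
    linarith
end

section
/- If n ≥ 11, then for every j with 1 ≤ j ≤ 2n−1 one has 3a_j − b_j < −7h²/16; in particular b_j > 3a_j + 7h²/16 > 0 and b_j / a_j > 3. -/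
/-!
The sine vectors `ψ_i(k) = sin(ikπ/(n+1))` are orthogonal eigenvectors of `T = tridiag(-1, 2, -1)`
(size `n`) with eigenvalues `4 sin²(iπ/(2(n+1)))`, so `λ̃_j` is the last diagonal entry of
`(T + λ_j)⁻¹`. Pairing `ψ_i` with `w_k = r^k - r^{-k}`, where `r + r⁻¹ = 2 + λ_j`, through the
discrete Green identity (the Casoratian telescopes) gives `λ̃_j = w_n / w_{n+1} < 1/r`.
Since `3a_j - b_j = (1 + 3h + λ_j(1-h)/2) λ̃_j - 1`, it remains to show
`1 + 3h + λ_j(1-h)/2 ≤ r (1 - 7h²/16)`, which follows from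
`r - 1 - λ_j/2 ≥ √λ_j ≥ 2 sin(πh/2) > 3h + 21h²/8` for `h ≤ 1/22`.
-/

open Real Finset

theorem two_mul_sin_half_mul_sum_Icc_cos (θ : ℝ) (n : ℕ) :
    2 * sin (θ / 2) * ∑ i ∈ Icc 1 n, cos (i * θ) = sin ((n + 1 / 2) * θ) - sin (θ / 2) := by
  induction n with
  | zero => norm_num [one_div_mul_eq_div]
  | succ n ih =>
    rw [sum_Icc_succ_top (by omega), mul_add, ih, two_mul_sin_mul_cos,
      show θ / 2 - (n + 1 : ℕ) * θ = -((n + 1 / 2) * θ) by push_cast; ring, sin_neg,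
      show θ / 2 + (n + 1 : ℕ) * θ = ((n + 1 : ℕ) + 1 / 2) * θ by push_cast; ring]
    ring

theorem sum_Icc_cos_mul_pi_div (n m : ℕ) (hm : 0 < m) (hm' : m < 2 * (n + 1)) :
    ∑ i ∈ Icc 1 n, cos (i * m * π / (n + 1)) = -(1 + (-1) ^ m) / 2 := by
  set θ : ℝ := m * π / (n + 1)
  have hθ : 0 < θ / 2 ∧ θ / 2 < π := by
    have : (m : ℝ) < 2 * (n + 1) := by exact_mod_cast hm'
    constructor
    · positivity
    · rw [div_div, div_lt_iff₀ (by positivity)]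
      nlinarith [pi_pos]
  have key := two_mul_sin_half_mul_sum_Icc_cos θ n
  rw [show ((n : ℝ) + 1 / 2) * θ = m * π - θ / 2 by simp only [θ]; field_simp; ring,
    sin_nat_mul_pi_sub] at key
  have hs : 2 * sin (θ / 2) ≠ 0 := by positivity [sin_pos_of_pos_of_lt_pi hθ.1 hθ.2]
  have hangle (i : ℕ) : (i : ℝ) * m * π / (n + 1) = i * θ := by simp only [θ]; ring
  simp_rw [hangle]
  exact mul_left_cancel₀ hs (by linear_combination key)

theorem sum_Icc_sin_mul_sin (n k l : ℕ) (hk : k ∈ Icc 1 n) (hl : l ∈ Icc 1 n) :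
    ∑ i ∈ Icc 1 n, sin (i * k * π / (n + 1)) * sin (i * l * π / (n + 1)) =
      if k = l then ((n : ℝ) + 1) / 2 else 0 := by
  wlog hkl : k ≤ l generalizing k l
  · rw [if_congr eq_comm rfl rfl, ← this l k hl hk (by omega)]
    exact sum_congr rfl fun i _ ↦ mul_comm _ _
  rw [mem_Icc] at hk hl
  have hterm (i : ℕ) : sin (i * k * π / (n + 1)) * sin (i * l * π / (n + 1)) =
      (cos (i * (l - k : ℕ) * π / (n + 1)) - cos (i * (l + k : ℕ) * π / (n + 1))) / 2 := by
    rw [mul_comm, eq_div_iff two_ne_zero, mul_comm, ← mul_assoc, two_mul_sin_mul_sin]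
    push_cast [hkl]
    ring_nf
  rw [sum_congr rfl fun i _ ↦ hterm i, ← sum_div, sum_sub_distrib,
    sum_Icc_cos_mul_pi_div n (l + k) (by omega) (by omega)]
  rcases hkl.eq_or_lt with rfl | hlt
  · simp only [Nat.sub_self, Nat.cast_zero, mul_zero, zero_mul, zero_div, cos_zero, sum_const,
      Nat.card_Icc, add_tsub_cancel_right, nsmul_eq_mul, mul_one, if_true, ← two_mul, pow_mul,
      neg_one_sq, one_pow]
    ring
  · rw [sum_Icc_cos_mul_pi_div n (l - k) (by omega) (by omega), if_neg hlt.ne,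
      show l + k = l - k + 2 * k by omega, pow_add, pow_mul, neg_one_sq, one_pow, mul_one,
      sub_self, zero_div]

section Casoratian

variable {R : Type*} [CommRing R]

def casoratian (u v : ℕ → R) (k : ℕ) : R := u k * v (k + 1) - u (k + 1) * v k

theorem mul_sum_range_eq_casoratian_sub {u v : ℕ → R} {α β : R}
    (hu : ∀ k, u k + u (k + 2) = α * u (k + 1)) (hv : ∀ k, v k + v (k + 2) = β * v (k + 1))
    (n : ℕ) :
    (β - α) * ∑ k ∈ range n, u (k + 1) * v (k + 1) = casoratian u v n - casoratian u v 0 := by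
  rw [mul_sum, ← sum_range_sub]
  refine sum_congr rfl fun k _ ↦ ?_
  simp only [casoratian]
  linear_combination v (k + 1) * hu k - u (k + 1) * hv k

end Casoratian

theorem sin_nat_mul_add_sin_nat_add_two_mul (θ : ℝ) (k : ℕ) :
    sin (k * θ) + sin ((k + 2 : ℕ) * θ) = (2 - 4 * sin (θ / 2) ^ 2) * sin ((k + 1 : ℕ) * θ) := by
  have hcos : 2 - 4 * sin (θ / 2) ^ 2 = 2 * cos θ := by
    rw [sin_sq_eq_half_sub, mul_div_cancel₀ θ two_ne_zero]; ring
  rw [hcos, mul_assoc, mul_comm (cos θ), ← mul_assoc, two_mul_sin_mul_cos]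
  push_cast
  ring_nf

def powSubInvPow {K : Type*} [DivisionRing K] (r : K) (k : ℕ) : K := r ^ k - r⁻¹ ^ k

theorem powSubInvPow_add_powSubInvPow_add_two {K : Type*} [Field K] {r : K} (hr : r ≠ 0)
    (k : ℕ) :
    powSubInvPow r k + powSubInvPow r (k + 2) = (r + r⁻¹) * powSubInvPow r (k + 1) := by
  simp only [powSubInvPow, pow_add, inv_pow]
  field_simp
  ring

theorem powSubInvPow_pos {r : ℝ} (hr : 1 < r) {k : ℕ} (hk : k ≠ 0) : 0 < powSubInvPow r k :=
  sub_pos.2 <| pow_lt_pow_left₀ ((inv_lt_one_of_one_lt₀ hr).trans hr) (by positivity) hk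

theorem mul_powSubInvPow_lt_succ {r : ℝ} (hr : 1 < r) (k : ℕ) :
    r * powSubInvPow r k < powSubInvPow r (k + 1) := by
  have hinv : r⁻¹ < r := (inv_lt_one_of_one_lt₀ hr).trans hr
  have := mul_lt_mul_of_pos_left hinv (pow_pos (inv_pos.2 (zero_lt_one.trans hr)) k)
  simp only [powSubInvPow, pow_succ]
  nlinarith

theorem mul_div_powSubInvPow_succ_lt_one {r : ℝ} (hr : 1 < r) (k : ℕ) :
    r * (powSubInvPow r k / powSubInvPow r (k + 1)) < 1 := by
  rw [← mul_div_assoc, div_lt_one (powSubInvPow_pos hr k.succ_ne_zero)]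
  exact mul_powSubInvPow_lt_succ hr k

theorem sum_sin_sq_div_eq_powSubInvPow_div (n : ℕ) {lam r : ℝ} (hr : 1 < r) (hrr : r + r⁻¹ = 2 + lam) :
    (2 / ((n : ℝ) + 1)) * ∑ i ∈ Icc 1 n, sin (i * n * π / (n + 1)) ^ 2 /
        (4 * sin (i * π / (2 * (n + 1))) ^ 2 + lam) =
      powSubInvPow r n / powSubInvPow r (n + 1) := by
  have hr0 : r ≠ 0 := by positivity
  have hlam : 0 < lam := by
    nlinarith [mul_pos (sub_pos.2 hr) (sub_pos.2 (inv_lt_one_of_one_lt₀ hr)),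
      mul_inv_cancel₀ hr0]
  have hw : powSubInvPow r (n + 1) ≠ 0 := (powSubInvPow_pos hr n.succ_ne_zero).ne'
  set w := powSubInvPow r
  set ψ : ℕ → ℕ → ℝ := fun i k ↦ sin (i * k * π / (n + 1))
  have hterm (i : ℕ) : ψ i n ^ 2 / (4 * sin (i * π / (2 * (n + 1))) ^ 2 + lam) =
      (∑ k ∈ range n, w (k + 1) * (ψ i n * ψ i (k + 1))) / w (n + 1) := by
    set θ : ℝ := i * π / (n + 1)
    have hψ (k : ℕ) : ψ i k = sin (k * θ) := by simp only [ψ, θ]; ring_nf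
    have hgreen := mul_sum_range_eq_casoratian_sub (u := ψ i) (v := w)
      (fun k ↦ by simp only [hψ]; exact sin_nat_mul_add_sin_nat_add_two_mul θ k)
      (powSubInvPow_add_powSubInvPow_add_two hr0) n
    have hψ0 : ψ i 0 = 0 := by simp [ψ]
    have hψn : ψ i (n + 1) = 0 := by
      have : ((n + 1 : ℕ) : ℝ) * θ = i * π := by simp only [θ]; push_cast; field_simp
      rw [hψ, this, sin_nat_mul_pi]
    have hw0 : w 0 = 0 := by simp [w, powSubInvPow]
    simp only [casoratian, hψ0, hψn, hw0, zero_add, mul_zero, zero_mul, sub_zero, hrr] at hgreen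
    have hden : 4 * sin (i * π / (2 * (n + 1))) ^ 2 + lam ≠ 0 := by positivity
    have hsum : ∑ k ∈ range n, w (k + 1) * (ψ i n * ψ i (k + 1)) =
        ψ i n * ∑ k ∈ range n, ψ i (k + 1) * w (k + 1) := by
      rw [mul_sum]; exact sum_congr rfl fun _ _ ↦ by ring
    rw [div_eq_div_iff hden hw, hsum]
    rw [show i * π / (2 * (n + 1)) = θ / 2 by simp only [θ]; field_simp]
    linear_combination -ψ i n * hgreen
  have horth (k : ℕ) (hk : k ∈ range n) : ∑ i ∈ Icc 1 n, ψ i n * ψ i (k + 1) =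
      if n = k + 1 then ((n : ℝ) + 1) / 2 else 0 :=
    sum_Icc_sin_mul_sin n n (k + 1) (by simp only [mem_range, mem_Icc] at hk ⊢; omega) (by simp only [mem_range, mem_Icc] at hk ⊢; omega)
  rw [sum_congr rfl fun i _ ↦ hterm i, ← sum_div, sum_comm]
  simp only [← mul_sum]
  rw [sum_congr rfl fun k hk ↦ congrArg _ (horth k hk)]
  obtain _ | m := n
  · simp [w, powSubInvPow]
  · rw [sum_range_succ, sum_eq_zero fun k hk ↦ by rw [if_neg (by simp only [mem_range] at hk; omega), mul_zero]]
    simp only [if_true, zero_add]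
    field_simp

theorem three_mul_add_lt_two_mul_sin {h : ℝ} (h0 : 0 < h) (h1 : h ≤ 1 / 22) :
    3 * h + 21 * h ^ 2 / 8 < 2 * sin (π * h / 2) := by
  have hsin := sin_gt_sub_cube (x := π * h / 2) (by positivity)
  have hπ3 : π ^ 3 < 32 := by
    nlinarith [pow_lt_pow_left₀ pi_lt_d2 pi_pos.le (by norm_num : 3 ≠ 0)]
  nlinarith [pi_gt_d2, mul_pos h0 h0, mul_pos (mul_pos h0 h0) h0]

section Eigenvalues

variable {n j : ℕ}

theorem lamRR_angle_mem_Ico (hj1 : 1 ≤ j) (hj2 : j < 2 * n) :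
    j * π / (4 * n) ∈ Set.Ico (π / (4 * n)) (π / 2) := by
  have hn : (0 : ℝ) < n := by norm_cast; omega
  have hj1' : (1 : ℝ) ≤ j := by exact_mod_cast hj1
  have hj2' : (j : ℝ) < 2 * n := by exact_mod_cast hj2
  constructor
  · gcongr
    exact le_mul_of_one_le_left pi_pos.le hj1'
  · rw [div_lt_div_iff₀ (by positivity) two_pos]
    nlinarith [pi_pos]

theorem lamRR_mem_Ioo (hj1 : 1 ≤ j) (hj2 : j < 2 * n) : lamRR n j ∈ Set.Ioo 0 4 := by
  obtain ⟨hlow, hhigh⟩ := lamRR_angle_mem_Ico hj1 hj2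
  have hn : (0 : ℝ) < n := by norm_cast; omega
  have hpos : 0 < π / (4 * n) := by positivity
  have hsin0 := sin_pos_of_pos_of_lt_pi (hpos.trans_le hlow) (by linarith [pi_pos])
  have hsin1 := sin_lt_sin_of_lt_of_le_pi_div_two (by linarith) le_rfl hhigh
  rw [sin_pi_div_two] at hsin1
  rw [lamRR]
  constructor <;> nlinarith

theorem two_mul_sin_le_sqrt_lamRR (hj1 : 1 ≤ j) (hj2 : j < 2 * n) :
    2 * sin (π / (4 * n)) ≤ √(lamRR n j) := by
  obtain ⟨hlow, hhigh⟩ := lamRR_angle_mem_Ico hj1 hj2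
  have hn : (0 : ℝ) < n := by norm_cast; omega
  have hpos : 0 < π / (4 * n) := by positivity
  have hsin := sin_le_sin_of_le_of_le_pi_div_two (by linarith) hhigh.le hlow
  have hsin0 := sin_pos_of_pos_of_lt_pi hpos (by linarith [pi_pos])
  rw [lamRR, show 4 * sin (j * π / (4 * n)) ^ 2 = (2 * sin (j * π / (4 * n))) ^ 2 by ring,
    sqrt_sq (by linarith)]
  linarith

/-- The root `r > 1` of `r + r⁻¹ = 2 + lam`. -/
noncomputable def largerRoot (lam : ℝ) : ℝ := 1 + lam / 2 + √(lam + lam ^ 2 / 4)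

theorem largerRoot_add_inv (lam : ℝ) (hlam : 0 ≤ lam) :
    largerRoot lam + (largerRoot lam)⁻¹ = 2 + lam := by
  have hsq : √(lam + lam ^ 2 / 4) ^ 2 = lam + lam ^ 2 / 4 := sq_sqrt (by positivity)
  have hinv : (largerRoot lam)⁻¹ = 1 + lam / 2 - √(lam + lam ^ 2 / 4) :=
    inv_eq_of_mul_eq_one_right (by rw [largerRoot]; linear_combination -hsq)
  rw [hinv, largerRoot]
  ring

theorem one_lt_largerRoot {lam : ℝ} (hlam : 0 < lam) : 1 < largerRoot lam := by
  have := sqrt_nonneg (lam + lam ^ 2 / 4)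
  rw [largerRoot]
  linarith

theorem coeff_le_largerRoot_mul {h lam : ℝ} (h0 : 0 < h) (hlam : lam ∈ Set.Ioo 0 4)
    (hsqrt : 3 * h + 21 * h ^ 2 / 8 ≤ √lam) :
    1 + 3 * h + lam * (1 - h) / 2 ≤ largerRoot lam * (1 - 7 * h ^ 2 / 16) := by
  obtain ⟨hlam0, hlam4⟩ := hlam
  have hq : √lam ≤ √(lam + lam ^ 2 / 4) := sqrt_le_sqrt (le_add_of_nonneg_right (by positivity))
  have hq3 : √(lam + lam ^ 2 / 4) ≤ 3 := (sqrt_le_left (by norm_num)).2 (by nlinarith)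
  rw [largerRoot]
  nlinarith [mul_nonneg hlam0.le h0.le, mul_pos h0 h0]

theorem lamTildeRR_eq (hlam : 0 < lamRR n j) :
    lamTildeRR n j = powSubInvPow (largerRoot (lamRR n j)) n /
      powSubInvPow (largerRoot (lamRR n j)) (n + 1) :=
  sum_sin_sq_div_eq_powSubInvPow_div n (one_lt_largerRoot hlam) (largerRoot_add_inv _ hlam.le)

theorem lamTildeRR_pos (hn : n ≠ 0) (hlam : 0 < lamRR n j) : 0 < lamTildeRR n j := by
  rw [lamTildeRR_eq hlam]
  exact div_pos (powSubInvPow_pos (one_lt_largerRoot hlam) hn)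
    (powSubInvPow_pos (one_lt_largerRoot hlam) n.succ_ne_zero)

theorem largerRoot_mul_lamTildeRR_lt_one (hlam : 0 < lamRR n j) :
    largerRoot (lamRR n j) * lamTildeRR n j < 1 := by
  rw [lamTildeRR_eq hlam]
  exact mul_div_powSubInvPow_succ_lt_one (one_lt_largerRoot hlam) n

theorem three_aRR_sub_bRR_lt (hn : 11 ≤ n) (hj1 : 1 ≤ j) (hj2 : j < 2 * n) :
    3 * aRR n j - bRR n j < -7 * (1 / (2 * (n : ℝ))) ^ 2 / 16 := by
  set h : ℝ := 1 / (2 * n)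
  have hlam := lamRR_mem_Ioo hj1 hj2
  have hh0 : 0 < h := by positivity
  have hh22 : h ≤ 1 / 22 := by
    simp only [h]
    gcongr
    norm_cast
    omega
  have hsqrt : 3 * h + 21 * h ^ 2 / 8 ≤ √(lamRR n j) := calc
    _ ≤ 2 * sin (π * h / 2) := (three_mul_add_lt_two_mul_sin hh0 hh22).le
    _ = 2 * sin (π / (4 * n)) := by simp only [h]; ring_nf
    _ ≤ √(lamRR n j) := two_mul_sin_le_sqrt_lamRR hj1 hj2
  have hcoeff := coeff_le_largerRoot_mul hh0 hlam hsqrt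
  have ht0 := lamTildeRR_pos (by omega) hlam.1
  have hrt := largerRoot_mul_lamTildeRR_lt_one hlam.1
  have hdiff : 3 * aRR n j - bRR n j =
      (1 + 3 * h + lamRR n j * (1 - h) / 2) * lamTildeRR n j - 1 := by
    simp only [aRR, bRR, h]
    ring
  have hε : 0 < 1 - 7 * h ^ 2 / 16 := by nlinarith
  rw [hdiff]
  nlinarith [mul_le_mul_of_nonneg_right hcoeff ht0.le, mul_lt_mul_of_pos_left hrt hε]

theorem aRR_pos (hj1 : 1 ≤ j) (hj2 : j < 2 * n) : 0 < aRR n j := by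
  have hlam := lamRR_mem_Ioo hj1 hj2
  have hn : (0 : ℝ) < n := by norm_cast; omega
  rw [aRR]
  refine mul_pos ?_ (lamTildeRR_pos (by omega) hlam.1)
  nlinarith [hlam.2, one_div_pos.2 (mul_pos two_pos hn)]

end Eigenvalues

/-- if `n ≥ 11` (with `h = 1/(2n)`), then for every `1 ≤ j ≤ 2n-1`
one has `3a_j - b_j < -7h²/16`; in particular `b_j > 3a_j + 7h²/16 > 0` and
`b_j/a_j > 3`. -/
theorem three_aj_sub_bj_bound (n : ℕ) (hn : 11 ≤ n) (h : ℝ)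
    (hh : h = 1 / (2 * (n : ℝ)))
    (j : ℕ) (hj1 : 1 ≤ j) (hj2 : j ≤ 2 * n - 1) :
    3 * aRR n j - bRR n j < -7 * h ^ 2 / 16 ∧
      bRR n j > 3 * aRR n j + 7 * h ^ 2 / 16 ∧
      3 * aRR n j + 7 * h ^ 2 / 16 > 0 ∧
      bRR n j / aRR n j > 3 := by
  have hj : j < 2 * n := by omega
  have hmain : 3 * aRR n j - bRR n j < -7 * h ^ 2 / 16 := hh ▸ three_aRR_sub_bRR_lt hn hj1 hj
  have ha := aRR_pos hj1 hj
  have hh2 : 0 ≤ 7 * h ^ 2 / 16 := by positivity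
  refine ⟨hmain, by linarith, by linarith, ?_⟩
  rw [gt_iff_lt, lt_div_iff₀ ha]
  linarith
end

section
/- Under Assumption (A2), the matrix T̃ is symmetric, and for every v ∈ ℝ^N one has ⟨T̃v, v⟩ ≥ ((λ̲₂ − γ₁)/(γ₂ + λ̲₂)) · ((γ₂ − λ̄₁)/(γ₁ + λ̄₁)) · ⟨v, v⟩. In particular, if moreover γ₁ < λ̲₂, then T̃ is symmetric positive definite. -/
open Matrix

namespace Matrix.PosSemidef

/-- The square root of a positive semidefinite matrix, as defined in Mathlib (Dec 2024). -/
noncomputable def sqrt {n 𝕜 : Type*} [Fintype n] [DecidableEq n] [RCLike 𝕜] [PartialOrder 𝕜]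
    {A : Matrix n n 𝕜} (hA : A.PosSemidef) : Matrix n n 𝕜 :=
  hA.1.eigenvectorUnitary.1 * diagonal ((↑) ∘ (Real.sqrt ·) ∘ hA.1.eigenvalues) *
    (star hA.1.eigenvectorUnitary : Matrix n n 𝕜)

end Matrix.PosSemidef

/-! Every factor of `T̃` other than `(S₂ - γ₁I)(γ₂I + S₂)⁻¹` is a function of `S₁`. Diagonalising
`S₁ = U₁ diag(e₁) U₁ᵀ` and `S₂ = U₂ diag(e₂) U₂ᵀ` therefore gives `T̃ = B M B` with the symmetric
matrices `B = U₁ diag(√((γ₂ - e₁)/(γ₁ + e₁))) U₁ᵀ` and `M = U₂ diag((e₂ - γ₁)/(γ₂ + e₂)) U₂ᵀ`.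
So `T̃` is symmetric and `⟨T̃v, v⟩ = ⟨M(Bv), Bv⟩ ≥ m⟨B²v, v⟩ ≥ mc⟨v, v⟩`, where `m` and `c` bound the
diagonal entries of `M` and `B²` from below; these bounds come from the monotonicity of
`x ↦ (x - γ₁)/(γ₂ + x)` and `x ↦ (γ₂ - x)/(γ₁ + x)` on the relevant eigenvalue ranges. -/

lemma monotoneOn_sub_div_add {a b : ℝ} (hab : 0 ≤ a + b) :
    MonotoneOn (fun x => (x - a) / (b + x)) (Set.Ioi (-b)) := by
  intro x hx y hy hxy
  rw [Set.mem_Ioi] at hx hy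
  rw [div_le_div_iff₀ (by linarith) (by linarith)]
  nlinarith

lemma antitoneOn_sub_div_add {a b : ℝ} (hab : 0 ≤ a + b) :
    AntitoneOn (fun x => (a - x) / (b + x)) (Set.Ioi (-b)) := by
  intro x hx y hy hxy
  rw [Set.mem_Ioi] at hx hy
  rw [div_le_div_iff₀ (by linarith) (by linarith)]
  nlinarith

namespace Matrix

variable {n : Type*} [Fintype n]

lemma IsHermitian.mulVec_dotProduct {A : Matrix n n ℝ} (hA : A.IsHermitian) (x y : n → ℝ) :
    (A *ᵥ x) ⬝ᵥ y = x ⬝ᵥ (A *ᵥ y) := by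
  rw [dotProduct_mulVec, ← mulVec_transpose, ← conjTranspose_eq_transpose_of_trivial, hA.eq]

lemma mul_le_dotProduct_mulVec_mul_mul {A B : Matrix n n ℝ} (hB : B.IsHermitian) {a b : ℝ}
    (ha : 0 ≤ a) (hA : ∀ w, a * (w ⬝ᵥ w) ≤ (A *ᵥ w) ⬝ᵥ w)
    (hBB : ∀ v, b * (v ⬝ᵥ v) ≤ ((B * B) *ᵥ v) ⬝ᵥ v) (v : n → ℝ) :
    a * b * (v ⬝ᵥ v) ≤ ((B * A * B) *ᵥ v) ⬝ᵥ v := by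
  have hBv : ((B * B) *ᵥ v) ⬝ᵥ v = (B *ᵥ v) ⬝ᵥ (B *ᵥ v) := by
    rw [← mulVec_mulVec, hB.mulVec_dotProduct]
  have hBAB : ((B * A * B) *ᵥ v) ⬝ᵥ v = (A *ᵥ (B *ᵥ v)) ⬝ᵥ (B *ᵥ v) := by
    rw [← mulVec_mulVec, ← mulVec_mulVec, hB.mulVec_dotProduct]
  calc a * b * (v ⬝ᵥ v) = a * (b * (v ⬝ᵥ v)) := mul_assoc _ _ _
    _ ≤ a * ((B *ᵥ v) ⬝ᵥ (B *ᵥ v)) := mul_le_mul_of_nonneg_left (hBv ▸ hBB v) ha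
    _ ≤ ((B * A * B) *ᵥ v) ⬝ᵥ v := hBAB ▸ hA (B *ᵥ v)

lemma PosDef.of_mul_le_dotProduct_mulVec {A : Matrix n n ℝ} (hA : A.IsHermitian) {a : ℝ}
    (ha : 0 < a) (hle : ∀ v, a * (v ⬝ᵥ v) ≤ (A *ᵥ v) ⬝ᵥ v) : A.PosDef := by
  refine .of_dotProduct_mulVec_pos hA fun v hv => ?_
  have hvv : 0 < v ⬝ᵥ v := by simpa using dotProduct_self_star_pos_iff.mpr hv
  rw [star_trivial, dotProduct_comm]
  exact (mul_pos ha hvv).trans_le (hle v)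

variable [DecidableEq n]

noncomputable def diagonalStarAlgHom (R : Type*) [CommSemiring R] [StarRing R] :
    (n → R) →⋆ₐ[R] Matrix n n R :=
  { diagonalAlgHom R with map_star' := fun d => (diagonal_conjTranspose d).symm }

/-- For the eigenvector matrix `U` of a symmetric `S` this is the functional calculus of `S`:
sums, products, inverses and square roots of matrices in its range are computed entrywise. -/
noncomputable def unitaryDiagonal (U : unitaryGroup n ℝ) : (n → ℝ) →⋆ₐ[ℝ] Matrix n n ℝ :=
  (Unitary.conjStarAlgAut ℝ _ U).toStarAlgHom.comp (diagonalStarAlgHom ℝ)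

lemma unitaryDiagonal_apply (U : unitaryGroup n ℝ) (d : n → ℝ) :
    unitaryDiagonal U d = (U : Matrix n n ℝ) * diagonal d * star (U : Matrix n n ℝ) := rfl

lemma IsHermitian.eq_unitaryDiagonal {A : Matrix n n ℝ} (hA : A.IsHermitian) :
    A = unitaryDiagonal hA.eigenvectorUnitary hA.eigenvalues := by
  rw [unitaryDiagonal_apply]
  simpa [Function.comp_def] using hA.spectral_theorem

section unitaryDiagonal

variable (U : unitaryGroup n ℝ)

lemma unitaryDiagonal_const (c : ℝ) : unitaryDiagonal U (fun _ => c) = c • 1 := by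
  rw [show (fun _ => c) = c • (1 : n → ℝ) from funext fun _ => (mul_one c).symm, map_smul,
    map_one]

lemma isHermitian_unitaryDiagonal (d : n → ℝ) : (unitaryDiagonal U d).IsHermitian := by
  rw [IsHermitian, ← star_eq_conjTranspose, ← map_star, star_trivial]

lemma posSemidef_unitaryDiagonal {d : n → ℝ} (hd : 0 ≤ d) :
    (unitaryDiagonal U d).PosSemidef := by
  have hsq : d = (fun i => √(d i)) * fun i => √(d i) :=
    funext fun i => (Real.mul_self_sqrt (hd i)).symm
  have h := posSemidef_conjTranspose_mul_self (unitaryDiagonal U fun i => √(d i))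
  rwa [(isHermitian_unitaryDiagonal U _).eq, ← map_mul, ← hsq] at h

lemma inv_unitaryDiagonal {d : n → ℝ} (hd : ∀ i, d i ≠ 0) :
    (unitaryDiagonal U d)⁻¹ = unitaryDiagonal U d⁻¹ := by
  refine inv_eq_right_inv ?_
  rw [← map_mul, show d * d⁻¹ = 1 from funext fun i => mul_inv_cancel₀ (hd i), map_one]

lemma PosSemidef.sqrt_eq_unitaryDiagonal {B : Matrix n n ℝ} (hB : B.PosSemidef) {d : n → ℝ}
    (hd : 0 ≤ d) (hBd : B = unitaryDiagonal U d) :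
    hB.sqrt = unitaryDiagonal U fun i => √(d i) := by
  open MatrixOrder in
  have hcfc : hB.sqrt = CFC.sqrt B := by
    rw [CFC.sqrt_eq_real_sqrt B hB.nonneg, cfcₙ_eq_cfc, hB.1.cfc_eq]
    rfl
  rw [hcfc]
  refine CFC.sqrt_unique ?_ (posSemidef_unitaryDiagonal U fun i => Real.sqrt_nonneg (d i)).nonneg
  rw [← map_mul, hBd]
  exact congrArg _ (funext fun i => Real.mul_self_sqrt (hd i))

lemma le_dotProduct_mulVec_unitaryDiagonal {d : n → ℝ} {c : ℝ} (hd : ∀ i, c ≤ d i)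
    (v : n → ℝ) : c * (v ⬝ᵥ v) ≤ (unitaryDiagonal U d *ᵥ v) ⬝ᵥ v := by
  have hsplit : unitaryDiagonal U d = unitaryDiagonal U (d - fun _ => c) + c • 1 := by
    rw [← unitaryDiagonal_const, ← map_add, sub_add_cancel]
  have hnonneg := (posSemidef_unitaryDiagonal U (d := d - fun _ => c)
    fun i => sub_nonneg.mpr (hd i)).dotProduct_mulVec_nonneg v
  rw [star_trivial, dotProduct_comm] at hnonneg
  rw [hsplit, add_mulVec, add_dotProduct, smul_mulVec, one_mulVec, smul_dotProduct, smul_eq_mul]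
  linarith

end unitaryDiagonal

lemma isHermitian_unitaryDiagonal_mul_mul (U₁ U₂ : unitaryGroup n ℝ) (b μ : n → ℝ) :
    (unitaryDiagonal U₁ b * unitaryDiagonal U₂ μ * unitaryDiagonal U₁ b).IsHermitian := by
  simpa only [(isHermitian_unitaryDiagonal U₁ b).eq] using
    isHermitian_mul_mul_conjTranspose (unitaryDiagonal U₁ b) (isHermitian_unitaryDiagonal U₂ μ)

lemma mul_le_dotProduct_mulVec_unitaryDiagonal_mul_mul (U₁ U₂ : unitaryGroup n ℝ)
    {b μ : n → ℝ} {m c : ℝ} (hm : 0 ≤ m) (hμ : ∀ i, m ≤ μ i) (hb : ∀ i, c ≤ b i * b i)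
    (v : n → ℝ) :
    m * c * (v ⬝ᵥ v) ≤
      ((unitaryDiagonal U₁ b * unitaryDiagonal U₂ μ * unitaryDiagonal U₁ b) *ᵥ v) ⬝ᵥ v :=
  mul_le_dotProduct_mulVec_mul_mul (isHermitian_unitaryDiagonal U₁ b) hm
    (le_dotProduct_mulVec_unitaryDiagonal U₂ hμ)
    (by simpa only [← map_mul] using le_dotProduct_mulVec_unitaryDiagonal U₁ (d := b * b) hb) v

lemma sqrt_inv_mul_sqrt_mul_mul_inv_mul_sqrt_mul_sqrt_inv {S₁ S₂ : Matrix n n ℝ}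
    (U₁ U₂ : unitaryGroup n ℝ) {e₁ e₂ : n → ℝ} (hS₁ : S₁ = unitaryDiagonal U₁ e₁)
    (hS₂ : S₂ = unitaryDiagonal U₂ e₂) {γ₁ γ₂ : ℝ} (hp : ∀ i, 0 < γ₁ + e₁ i)
    (hq : ∀ i, 0 ≤ γ₂ - e₁ i) (hw : ∀ i, γ₂ + e₂ i ≠ 0)
    (hP : (γ₁ • (1 : Matrix n n ℝ) + S₁).PosSemidef)
    (hQ : (γ₂ • (1 : Matrix n n ℝ) - S₁).PosSemidef) :
    hP.sqrt⁻¹ * hQ.sqrt * (S₂ - γ₁ • 1) * (γ₂ • 1 + S₂)⁻¹ * hQ.sqrt * hP.sqrt⁻¹ =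
      unitaryDiagonal U₁ (fun i => √((γ₂ - e₁ i) / (γ₁ + e₁ i))) *
        unitaryDiagonal U₂ (fun i => (e₂ i - γ₁) / (γ₂ + e₂ i)) *
        unitaryDiagonal U₁ (fun i => √((γ₂ - e₁ i) / (γ₁ + e₁ i))) := by
  have hP' : hP.sqrt = unitaryDiagonal U₁ fun i => √(γ₁ + e₁ i) :=
    hP.sqrt_eq_unitaryDiagonal U₁ (fun i => (hp i).le)
      (by rw [hS₁, ← unitaryDiagonal_const, ← map_add]; rfl)
  have hQ' : hQ.sqrt = unitaryDiagonal U₁ fun i => √(γ₂ - e₁ i) :=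
    hQ.sqrt_eq_unitaryDiagonal U₁ hq (by rw [hS₁, ← unitaryDiagonal_const, ← map_sub]; rfl)
  have hR : S₂ - γ₁ • 1 = unitaryDiagonal U₂ fun i => e₂ i - γ₁ := by
    rw [hS₂, ← unitaryDiagonal_const, ← map_sub]; rfl
  have hW : (γ₂ • 1 + S₂)⁻¹ = unitaryDiagonal U₂ fun i => (γ₂ + e₂ i)⁻¹ := by
    rw [hS₂, ← unitaryDiagonal_const, ← map_add]; exact inv_unitaryDiagonal U₂ hw
  rw [mul_assoc _ hQ.sqrt, mul_assoc (hP.sqrt⁻¹ * hQ.sqrt), hP', hQ', hR, hW,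
    inv_unitaryDiagonal U₁ fun i => (Real.sqrt_pos.2 (hp i)).ne', ← map_mul, ← map_mul,
    ← map_mul]
  congr 3 <;> funext i <;> simp [(hp i).le, div_eq_mul_inv, mul_comm]

end Matrix

theorem tildeT_symmetric_and_lower_bound_general (N : ℕ)
    (S1 S2 : Matrix (Fin N) (Fin N) ℝ) (hS1 : S1.PosDef) (hS2 : S2.PosDef)
    (lmin1 lmax1 lmin2 lmax2 : ℝ)
    (hlmax1 : IsGreatest (Set.range hS1.isHermitian.eigenvalues) lmax1)
    (hlmin2 : IsLeast (Set.range hS2.isHermitian.eigenvalues) lmin2)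
    (γ1 γ2 : ℝ) (hγ1 : 0 < γ1) (hγ1' : γ1 ≤ min lmin1 lmin2)
    (hγ2 : 3 * max lmax1 lmax2 ≤ γ2)
    (hP1 : (γ1 • (1 : Matrix (Fin N) (Fin N) ℝ) + S1).PosSemidef)
    (hQ1 : (γ2 • (1 : Matrix (Fin N) (Fin N) ℝ) - S1).PosSemidef)
    (Tt : Matrix (Fin N) (Fin N) ℝ)
    (hTt : Tt = hP1.sqrt⁻¹ * hQ1.sqrt * (S2 - γ1 • (1 : Matrix (Fin N) (Fin N) ℝ)) *
      (γ2 • (1 : Matrix (Fin N) (Fin N) ℝ) + S2)⁻¹ * hQ1.sqrt * hP1.sqrt⁻¹) :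
    Tt.IsSymm ∧
      (∀ v : Fin N → ℝ,
        ((lmin2 - γ1) / (γ2 + lmin2)) * ((γ2 - lmax1) / (γ1 + lmax1)) * (v ⬝ᵥ v) ≤
          (Tt *ᵥ v) ⬝ᵥ v) ∧
      (γ1 < lmin2 → Tt.IsSymm ∧ Tt.PosDef) := by
  set e1 := hS1.isHermitian.eigenvalues
  set e2 := hS2.isHermitian.eigenvalues
  have he1 : ∀ i, 0 < e1 i := hS1.eigenvalues_pos
  have he1_le : ∀ i, e1 i ≤ lmax1 := fun i => hlmax1.2 ⟨i, rfl⟩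
  have he2_ge : ∀ i, lmin2 ≤ e2 i := fun i => hlmin2.2 ⟨i, rfl⟩
  have hlmax1_pos : 0 < lmax1 := by obtain ⟨i, hi⟩ := hlmax1.1; exact hi ▸ he1 i
  have hγ1_le : γ1 ≤ lmin2 := hγ1'.trans (min_le_right _ _)
  have hlmax1_lt : lmax1 < γ2 := by linarith [le_max_left lmax1 lmax2]
  have hμ : ∀ i, (lmin2 - γ1) / (γ2 + lmin2) ≤ (e2 i - γ1) / (γ2 + e2 i) := fun i =>
    monotoneOn_sub_div_add (by linarith) (Set.mem_Ioi.2 (by linarith))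
      (Set.mem_Ioi.2 (by linarith [he2_ge i])) (he2_ge i)
  have hb : ∀ i, (γ2 - lmax1) / (γ1 + lmax1) ≤ (γ2 - e1 i) / (γ1 + e1 i) := fun i =>
    antitoneOn_sub_div_add (by linarith) (Set.mem_Ioi.2 (by linarith [he1 i]))
      (Set.mem_Ioi.2 (by linarith)) (he1_le i)
  have hT := hTt.trans <| sqrt_inv_mul_sqrt_mul_mul_inv_mul_sqrt_mul_sqrt_inv _ _
    hS1.isHermitian.eq_unitaryDiagonal hS2.isHermitian.eq_unitaryDiagonal
    (fun i => by linarith [he1 i]) (fun i => by linarith [he1_le i])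
    (fun i => by linarith [he2_ge i]) hP1 hQ1
  have hherm : Tt.IsHermitian := hT ▸ isHermitian_unitaryDiagonal_mul_mul _ _ _ _
  have hbound := hT ▸ mul_le_dotProduct_mulVec_unitaryDiagonal_mul_mul _ _
    (div_nonneg (by linarith) (by linarith)) hμ fun i => (hb i).trans_eq
      (Real.mul_self_sqrt (div_nonneg (by linarith [he1_le i]) (by linarith [he1 i]))).symm
  have hsymm : Tt.IsSymm := isHermitian_iff_isSymm.mp hherm
  refine ⟨hsymm, hbound, fun hlt => ⟨hsymm, ?_⟩⟩
  exact PosDef.of_mul_le_dotProduct_mulVec hherm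
    (mul_pos (div_pos (by linarith) (by linarith)) (div_pos (by linarith) (by linarith))) hbound

/-- under Assumption (A2) the matrix
`T̃ = (γ₁I + S₁)^{-1/2}(γ₂I - S₁)^{1/2}(S₂ - γ₁I)(γ₂I + S₂)⁻¹(γ₂I - S₁)^{1/2}(γ₁I + S₁)^{-1/2}`
is symmetric and satisfies
`⟨T̃v, v⟩ ≥ ((λ̲₂ - γ₁)/(γ₂ + λ̲₂))·((γ₂ - λ̄₁)/(γ₁ + λ̄₁))·⟨v, v⟩` for all `v`;
in particular, if moreover `γ₁ < λ̲₂`, then `T̃` is symmetric positive definite. -/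
theorem tildeT_symmetric_and_lower_bound (N : ℕ) (hN : 1 ≤ N)
    (S1 S2 : Matrix (Fin N) (Fin N) ℝ) (hS1 : S1.PosDef) (hS2 : S2.PosDef)
    (lmin1 lmax1 lmin2 lmax2 : ℝ)
    (hlmin1 : IsLeast (Set.range hS1.isHermitian.eigenvalues) lmin1)
    (hlmax1 : IsGreatest (Set.range hS1.isHermitian.eigenvalues) lmax1)
    (hlmin2 : IsLeast (Set.range hS2.isHermitian.eigenvalues) lmin2)
    (hlmax2 : IsGreatest (Set.range hS2.isHermitian.eigenvalues) lmax2)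
    (γ1 γ2 : ℝ) (hγ1 : 0 < γ1) (hγ1' : γ1 ≤ min lmin1 lmin2)
    (hγ2 : 3 * max lmax1 lmax2 ≤ γ2)
    (hP1 : (γ1 • (1 : Matrix (Fin N) (Fin N) ℝ) + S1).PosSemidef)
    (hQ1 : (γ2 • (1 : Matrix (Fin N) (Fin N) ℝ) - S1).PosSemidef)
    (Tt : Matrix (Fin N) (Fin N) ℝ)
    (hTt : Tt = hP1.sqrt⁻¹ * hQ1.sqrt * (S2 - γ1 • (1 : Matrix (Fin N) (Fin N) ℝ)) *
      (γ2 • (1 : Matrix (Fin N) (Fin N) ℝ) + S2)⁻¹ * hQ1.sqrt * hP1.sqrt⁻¹) :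
    Tt.IsSymm ∧
      (∀ v : Fin N → ℝ,
        ((lmin2 - γ1) / (γ2 + lmin2)) * ((γ2 - lmax1) / (γ1 + lmax1)) * (v ⬝ᵥ v) ≤
          (Tt *ᵥ v) ⬝ᵥ v) ∧
      (γ1 < lmin2 → Tt.IsSymm ∧ Tt.PosDef) :=
  tildeT_symmetric_and_lower_bound_general N S1 S2 hS1 hS2 lmin1 lmax1 lmin2 lmax2 hlmax1 hlmin2 γ1
    γ2 hγ1 hγ1' hγ2 hP1 hQ1 Tt hTt
end

section
/- Under Assumptions (A1) and (A2), for every v ∈ ℝ^N one has ⟨(γ₂I − S₂)⁻¹(γ₁I + S₂)v, v⟩ ≤ (2t − 1)·⟨(γ₂I − S₁)⁻¹(γ₁I + S₁)v, v⟩. -/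
/-!
Since `(γ₂ - S)⁻¹ (γ₁ + S) = (γ₁ + γ₂) (γ₂ - S)⁻¹ - 1`, the claim compares the resolvent forms
`⟨(γ₂ - Sᵢ)⁻¹ v, v⟩`. We pass through the intermediate resolvent `(t γ₂ - S₂)⁻¹`. From `S₂ ≤ t S₁`
we get `t (γ₂ - S₁) ≤ t γ₂ - S₂`, and inversion reverses the Loewner order (by the variational
formula `⟨P⁻¹ v, v⟩ = max_x (2 ⟨x, v⟩ - ⟨P x, x⟩)`), so `t ⟨(t γ₂ - S₂)⁻¹ v, v⟩ ≤ ⟨(γ₂ - S₁)⁻¹ v, v⟩`.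
What remains involves `S₂` alone; in its eigenbasis it is a scalar inequality for every eigenvalue
`μ ∈ [γ₁, γ₂ / 3]`.
-/

open Matrix

namespace Matrix

variable {n : Type*} [Fintype n]

lemma IsHermitian.dotProduct_mulVec_comm {P : Matrix n n ℝ} (hP : P.IsHermitian) (x y : n → ℝ) :
    x ⬝ᵥ (P *ᵥ y) = (P *ᵥ x) ⬝ᵥ y := by
  rw [dotProduct_mulVec, ← mulVec_transpose, ← conjTranspose_eq_transpose_of_trivial, hP.eq]

variable [DecidableEq n]

lemma PosDef.two_mul_dotProduct_sub_form_le_inv_form {P : Matrix n n ℝ} (hP : P.PosDef)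
    (x v : n → ℝ) : 2 * (x ⬝ᵥ v) - (P *ᵥ x) ⬝ᵥ x ≤ (P⁻¹ *ᵥ v) ⬝ᵥ v := by
  set y := P⁻¹ *ᵥ v
  have hPy : P *ᵥ y = v := by
    rw [mulVec_mulVec, mul_nonsing_inv _ hP.det_pos.ne'.isUnit, one_mulVec]
  have hsq := hP.posSemidef.dotProduct_mulVec_nonneg (x - y)
  rw [star_trivial, mulVec_sub, hPy, dotProduct_sub, sub_dotProduct, sub_dotProduct,
    hP.isHermitian.dotProduct_mulVec_comm, hP.isHermitian.dotProduct_mulVec_comm y, hPy] at hsq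
  simp only [dotProduct_comm v] at hsq ⊢
  linarith

lemma PosDef.mul_inv_form_le_of_mul_form_le {P Q : Matrix n n ℝ} (hP : P.PosDef)
    (hQ : IsUnit Q.det) {c : ℝ} (hc : 0 ≤ c)
    (hPQ : ∀ u, c * ((P *ᵥ u) ⬝ᵥ u) ≤ (Q *ᵥ u) ⬝ᵥ u) (v : n → ℝ) :
    c * ((Q⁻¹ *ᵥ v) ⬝ᵥ v) ≤ (P⁻¹ *ᵥ v) ⬝ᵥ v := by
  set y := Q⁻¹ *ᵥ v
  have hQy : Q *ᵥ y = v := by rw [mulVec_mulVec, mul_nonsing_inv _ hQ, one_mulVec]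
  have hvar := hP.two_mul_dotProduct_sub_form_le_inv_form (c • y) v
  rw [mulVec_smul, smul_dotProduct, dotProduct_smul, smul_dotProduct] at hvar
  simp only [smul_eq_mul] at hvar
  have hcmp := mul_le_mul_of_nonneg_left (hPQ y) hc
  rw [hQy, dotProduct_comm v] at hcmp
  linarith

lemma inv_mul_smul_one_add_form {R : Type*} [CommRing R] {S : Matrix n n R} {α β : R}
    (h : IsUnit (α • 1 - S).det) (v : n → R) :
    (((α • 1 - S)⁻¹ * (β • 1 + S)) *ᵥ v) ⬝ᵥ v =
      (α + β) * (((α • 1 - S)⁻¹ *ᵥ v) ⬝ᵥ v) - v ⬝ᵥ v := by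
  have hsplit : β • 1 + S = (α + β) • 1 - (α • 1 - S) := by module
  rw [hsplit, Matrix.mul_sub, Matrix.mul_smul, mul_one, nonsing_inv_mul _ h, sub_mulVec,
    smul_mulVec, one_mulVec, sub_dotProduct, smul_dotProduct, smul_eq_mul]

lemma dotProduct_mulVec_conj_diagonal (U : Matrix n n ℝ) (d v : n → ℝ) :
    ((U * diagonal d * star U) *ᵥ v) ⬝ᵥ v = ∑ i, d i * (star U *ᵥ v) i ^ 2 := by
  have hU : star U = Uᵀ := conjTranspose_eq_transpose_of_trivial U
  rw [← mulVec_mulVec, ← mulVec_mulVec, dotProduct_comm, dotProduct_mulVec, ← mulVec_transpose,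
    ← hU]
  simp only [dotProduct, mulVec_diagonal]
  exact Finset.sum_congr rfl fun i _ => by ring

namespace IsHermitian

variable {S : Matrix n n ℝ} (hS : S.IsHermitian)

lemma smul_one_sub_eq_conj_diagonal (α : ℝ) :
    α • 1 - S = (hS.eigenvectorUnitary : Matrix n n ℝ) *
      diagonal (fun i => α - hS.eigenvalues i) * star (hS.eigenvectorUnitary : Matrix n n ℝ) := by
  conv_lhs => rw [hS.spectral_theorem]
  simp [Matrix.mul_sub, Matrix.sub_mul, ← diagonal_sub, ← smul_one_eq_diagonal]

lemma inv_smul_one_sub_eq_conj_diagonal {α : ℝ} (hα : ∀ i, hS.eigenvalues i ≠ α) :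
    (α • 1 - S)⁻¹ = (hS.eigenvectorUnitary : Matrix n n ℝ) *
      diagonal (fun i => (α - hS.eigenvalues i)⁻¹) *
        star (hS.eigenvectorUnitary : Matrix n n ℝ) := by
  refine inv_eq_left_inv ?_
  have hd : diagonal (fun i => (α - hS.eigenvalues i)⁻¹) *
      diagonal (fun i => α - hS.eigenvalues i) = 1 := by
    rw [diagonal_mul_diagonal, ← diagonal_one]
    exact congrArg diagonal (funext fun i => inv_mul_cancel₀ (sub_ne_zero.mpr (hα i).symm))
  rw [hS.smul_one_sub_eq_conj_diagonal]
  simp only [mul_assoc]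
  rw [← mul_assoc (star _) (hS.eigenvectorUnitary : Matrix n n ℝ), Unitary.coe_star_mul_self,
    one_mul, ← mul_assoc (diagonal _), hd, one_mul,
    Unitary.mul_star_self_of_mem hS.eigenvectorUnitary.2]

lemma posDef_smul_one_sub {α : ℝ} (hα : ∀ i, hS.eigenvalues i < α) : (α • 1 - S).PosDef := by
  rw [hS.smul_one_sub_eq_conj_diagonal, IsUnit.posDef_star_right_conjugate_iff Unitary.isUnit_coe,
    posDef_diagonal_iff]
  exact fun i => sub_pos.mpr (hα i)

lemma inv_smul_one_sub_form_le {α β a b c : ℝ} (hα : ∀ i, hS.eigenvalues i ≠ α)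
    (hβ : ∀ i, hS.eigenvalues i ≠ β)
    (h : ∀ i, a * (α - hS.eigenvalues i)⁻¹ + b ≤ c * (β - hS.eigenvalues i)⁻¹) (v : n → ℝ) :
    a * (((α • 1 - S)⁻¹ *ᵥ v) ⬝ᵥ v) + b * (v ⬝ᵥ v) ≤ c * (((β • 1 - S)⁻¹ *ᵥ v) ⬝ᵥ v) := by
  set U := (hS.eigenvectorUnitary : Matrix n n ℝ)
  have hv : v ⬝ᵥ v = ∑ i, 1 * (star U *ᵥ v) i ^ 2 := by
    rw [← dotProduct_mulVec_conj_diagonal, diagonal_one, mul_one,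
      Unitary.mul_star_self_of_mem hS.eigenvectorUnitary.2, one_mulVec]
  rw [hS.inv_smul_one_sub_eq_conj_diagonal hα, hS.inv_smul_one_sub_eq_conj_diagonal hβ, hv,
    dotProduct_mulVec_conj_diagonal, dotProduct_mulVec_conj_diagonal, Finset.mul_sum,
    Finset.mul_sum, Finset.mul_sum, ← Finset.sum_add_distrib]
  refine Finset.sum_le_sum fun i _ => ?_
  have := mul_le_mul_of_nonneg_right (h i) (sq_nonneg ((star U *ᵥ v) i))
  linarith

end IsHermitian

end Matrix

lemma resolvent_comparison_scalar {γ1 γ2 t μ : ℝ} (hγ1 : 0 < γ1) (ht : 1 ≤ t) (h1 : γ1 ≤ μ)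
    (h2 : 3 * μ ≤ γ2) :
    (γ1 + γ2) * (γ2 - μ)⁻¹ + (2 * t - 2) ≤ (2 * t - 1) * (γ1 + γ2) * t * (t * γ2 - μ)⁻¹ := by
  have hd1 : 0 < γ2 - μ := by linarith
  have hd2 : 0 < t * γ2 - μ := by nlinarith
  have hfactor : (2 * t - 1) * (γ1 + γ2) * t * (t * γ2 - μ)⁻¹ -
      ((γ1 + γ2) * (γ2 - μ)⁻¹ + (2 * t - 2)) =
        (t - 1) * (2 * γ1 * (γ2 - μ) * t + μ * (γ2 - γ1 - 2 * μ)) /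
          ((γ2 - μ) * (t * γ2 - μ)) := by
    field_simp
    ring
  have hA : 0 ≤ 2 * γ1 * (γ2 - μ) * t :=
    mul_nonneg (mul_nonneg (by positivity) hd1.le) (by linarith)
  have hB : 0 ≤ μ * (γ2 - γ1 - 2 * μ) := mul_nonneg (by linarith) (by linarith)
  rw [← sub_nonneg, hfactor]
  exact div_nonneg (mul_nonneg (by linarith) (add_nonneg hA hB)) (mul_pos hd1 hd2).le

theorem inverse_form_comparison_general (N : ℕ)
    (S1 S2 : Matrix (Fin N) (Fin N) ℝ) (hS1 : S1.PosDef) (hS2 : S2.PosDef)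
    (lmin1 lmax1 lmin2 lmax2 : ℝ)
    (hlmax1 : IsGreatest (Set.range hS1.isHermitian.eigenvalues) lmax1)
    (hlmin2 : IsLeast (Set.range hS2.isHermitian.eigenvalues) lmin2)
    (hlmax2 : IsGreatest (Set.range hS2.isHermitian.eigenvalues) lmax2)
    (s t : ℝ) (ht : 1 ≤ t)
    (hA1 : ∀ v : Fin N → ℝ,
      s * ((S1 *ᵥ v) ⬝ᵥ v) ≤ (S2 *ᵥ v) ⬝ᵥ v ∧ (S2 *ᵥ v) ⬝ᵥ v ≤ t * ((S1 *ᵥ v) ⬝ᵥ v))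
    (γ1 γ2 : ℝ) (hγ1 : 0 < γ1) (hγ1' : γ1 ≤ min lmin1 lmin2)
    (hγ2 : 3 * max lmax1 lmax2 ≤ γ2) :
    ∀ v : Fin N → ℝ,
      (((γ2 • (1 : Matrix (Fin N) (Fin N) ℝ) - S2)⁻¹ *
          (γ1 • (1 : Matrix (Fin N) (Fin N) ℝ) + S2)) *ᵥ v) ⬝ᵥ v ≤
        (2 * t - 1) *
          ((((γ2 • (1 : Matrix (Fin N) (Fin N) ℝ) - S1)⁻¹ *
            (γ1 • (1 : Matrix (Fin N) (Fin N) ℝ) + S1)) *ᵥ v) ⬝ᵥ v) := by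
  intro v
  set μ1 := hS1.isHermitian.eigenvalues
  set μ2 := hS2.isHermitian.eigenvalues
  have hμ1 (i : Fin N) : 0 < μ1 i ∧ 3 * μ1 i ≤ γ2 :=
    ⟨hS1.eigenvalues_pos i, by linarith [hlmax1.2 (Set.mem_range_self i), le_max_left lmax1 lmax2]⟩
  have hμ2 (i : Fin N) : γ1 ≤ μ2 i ∧ 3 * μ2 i ≤ γ2 :=
    ⟨by linarith [hlmin2.2 (Set.mem_range_self i), min_le_right lmin1 lmin2],
      by linarith [hlmax2.2 (Set.mem_range_self i), le_max_right lmax1 lmax2]⟩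
  have hγ2 : 0 < γ2 := by
    obtain ⟨i, -⟩ := hlmax1.1
    linarith [hμ1 i]
  have hP := hS1.isHermitian.posDef_smul_one_sub (α := γ2) fun i => by linarith [hμ1 i]
  have hR := hS2.isHermitian.posDef_smul_one_sub (α := γ2) fun i => by linarith [hμ2 i]
  have hQ := hS2.isHermitian.posDef_smul_one_sub (α := t * γ2) fun i => by nlinarith [hμ2 i]
  rw [inv_mul_smul_one_add_form hR.det_pos.ne'.isUnit,
    inv_mul_smul_one_add_form hP.det_pos.ne'.isUnit]
  have hresolvent := hS2.isHermitian.inv_smul_one_sub_form_le (fun i => by linarith [hμ2 i])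
    (fun i => by nlinarith [hμ2 i])
    (fun i => resolvent_comparison_scalar hγ1 ht (hμ2 i).1 (hμ2 i).2) v
  have hanti := hP.mul_inv_form_le_of_mul_form_le hQ.det_pos.ne'.isUnit (c := t) (by linarith)
    (fun u => by
      simp only [sub_mulVec, smul_mulVec, one_mulVec, sub_dotProduct, smul_dotProduct, smul_eq_mul]
      linarith [(hA1 u).2]) v
  have hcoef : 0 ≤ (2 * t - 1) * (γ1 + γ2) := mul_nonneg (by linarith) (by linarith)
  linarith [mul_le_mul_of_nonneg_left hanti hcoef]

/-- under Assumptions (A1) and (A2), for every `v ∈ ℝ^N` one has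
`⟨(γ₂I - S₂)⁻¹(γ₁I + S₂)v, v⟩ ≤ (2t - 1)·⟨(γ₂I - S₁)⁻¹(γ₁I + S₁)v, v⟩`. -/
theorem inverse_form_comparison (N : ℕ) (hN : 1 ≤ N)
    (S1 S2 : Matrix (Fin N) (Fin N) ℝ) (hS1 : S1.PosDef) (hS2 : S2.PosDef)
    (lmin1 lmax1 lmin2 lmax2 : ℝ)
    (hlmin1 : IsLeast (Set.range hS1.isHermitian.eigenvalues) lmin1)
    (hlmax1 : IsGreatest (Set.range hS1.isHermitian.eigenvalues) lmax1)
    (hlmin2 : IsLeast (Set.range hS2.isHermitian.eigenvalues) lmin2)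
    (hlmax2 : IsGreatest (Set.range hS2.isHermitian.eigenvalues) lmax2)
    (s t : ℝ) (hs : 0 < s) (hs1 : s ≤ 1) (ht : 1 ≤ t)
    (hA1 : ∀ v : Fin N → ℝ,
      s * ((S1 *ᵥ v) ⬝ᵥ v) ≤ (S2 *ᵥ v) ⬝ᵥ v ∧ (S2 *ᵥ v) ⬝ᵥ v ≤ t * ((S1 *ᵥ v) ⬝ᵥ v))
    (γ1 γ2 : ℝ) (hγ1 : 0 < γ1) (hγ1' : γ1 ≤ min lmin1 lmin2)
    (hγ2 : 3 * max lmax1 lmax2 ≤ γ2) :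
    ∀ v : Fin N → ℝ,
      (((γ2 • (1 : Matrix (Fin N) (Fin N) ℝ) - S2)⁻¹ *
          (γ1 • (1 : Matrix (Fin N) (Fin N) ℝ) + S2)) *ᵥ v) ⬝ᵥ v ≤
        (2 * t - 1) *
          ((((γ2 • (1 : Matrix (Fin N) (Fin N) ℝ) - S1)⁻¹ *
            (γ1 • (1 : Matrix (Fin N) (Fin N) ℝ) + S1)) *ᵥ v) ⬝ᵥ v) :=
  inverse_form_comparison_general N S1 S2 hS1 hS2 lmin1 lmax1 lmin2 lmax2 hlmax1 hlmin2 hlmax2 s t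
    ht hA1 γ1 γ2 hγ1 hγ1' hγ2
end

section
/- Under Assumptions (A1) and (A2), for every v ∈ ℝ^N one has ⟨(γ₂I − S₁)(γ₁I + S₁)⁻¹v, v⟩ ≤ (2t − 1)·⟨(γ₂I − S₂)(γ₁I + S₂)⁻¹v, v⟩. -/
/-!
Write `Aᵢ = γ₁I + Sᵢ`. Since `γ₂I - Sᵢ = (γ₁ + γ₂)I - Aᵢ`, the form on the left is
`(γ₁ + γ₂)⟨Aᵢ⁻¹v, v⟩ - |v|²`. Inversion reverses inequalities between quadratic forms, by the
variational formula `⟨P⁻¹v, v⟩ = max_w (2⟨v, w⟩ - ⟨Pw, w⟩)`. Applied to `A₂ ≤ t A₁` (from (A1)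
and `t ≥ 1`) this gives `⟨A₁⁻¹v, v⟩ ≤ t⟨A₂⁻¹v, v⟩`; applied to `A₂ ≤ (γ₁ + λ̄₂)I` together with
`2(γ₁ + λ̄₂) ≤ γ₁ + γ₂` (from (A2)) it gives `x := (γ₁ + γ₂)⟨A₂⁻¹v, v⟩ ≥ 2|v|²`. Finally
`t x - |v|² ≤ (2t - 1)(x - |v|²)` because the difference is `(t - 1)(x - 2|v|²) ≥ 0`.
-/

open Matrix Unitary

namespace Matrix

variable {n : Type*} [Fintype n]

lemma PosSemidef.mulVec_dotProduct_self_nonneg {M : Matrix n n ℝ} (hM : M.PosSemidef)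
    (v : n → ℝ) : 0 ≤ (M *ᵥ v) ⬝ᵥ v := by
  simpa only [star_trivial, dotProduct_comm v] using hM.dotProduct_mulVec_nonneg v

lemma IsHermitian.mulVec_dotProduct_comm {A : Matrix n n ℝ} (hA : A.IsHermitian) (v w : n → ℝ) :
    (A *ᵥ v) ⬝ᵥ w = v ⬝ᵥ (A *ᵥ w) := by
  rw [dotProduct_mulVec, ← mulVec_transpose, ← conjTranspose_eq_transpose_of_trivial, hA.eq,
    dotProduct_comm]

variable [DecidableEq n]

lemma smul_one_add_mulVec_dotProduct (γ : ℝ) (S : Matrix n n ℝ) (v : n → ℝ) :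
    ((γ • 1 + S) *ᵥ v) ⬝ᵥ v = γ * (v ⬝ᵥ v) + (S *ᵥ v) ⬝ᵥ v := by
  rw [add_mulVec, smul_mulVec, one_mulVec, add_dotProduct, smul_dotProduct, smul_eq_mul]

lemma IsHermitian.posSemidef_smul_one_sub {A : Matrix n n ℝ} (hA : A.IsHermitian) {μ : ℝ}
    (hμ : ∀ i, hA.eigenvalues i ≤ μ) : (μ • 1 - A).PosSemidef := by
  rw [hA.spectral_theorem, ← map_one (conjStarAlgAut ℝ _ hA.eigenvectorUnitary), ← map_smul,
    ← map_sub, conjStarAlgAut_apply, isUnit_coe.posSemidef_star_right_conjugate_iff,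
    smul_one_eq_diagonal, diagonal_sub]
  exact PosSemidef.diagonal fun i ↦ sub_nonneg.2 (hμ i)

lemma IsHermitian.mulVec_dotProduct_self_le {A : Matrix n n ℝ} (hA : A.IsHermitian) {μ : ℝ}
    (hμ : ∀ i, hA.eigenvalues i ≤ μ) (v : n → ℝ) : (A *ᵥ v) ⬝ᵥ v ≤ μ * (v ⬝ᵥ v) := by
  have h := (hA.posSemidef_smul_one_sub hμ).mulVec_dotProduct_self_nonneg v
  rw [sub_mulVec, smul_mulVec, one_mulVec, sub_dotProduct, smul_dotProduct, smul_eq_mul] at h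
  linarith

lemma PosDef.two_mul_dotProduct_sub_le_inv_mulVec_dotProduct {P : Matrix n n ℝ} (hP : P.PosDef)
    (v w : n → ℝ) : 2 * (v ⬝ᵥ w) - (P *ᵥ w) ⬝ᵥ w ≤ (P⁻¹ *ᵥ v) ⬝ᵥ v := by
  set u := P⁻¹ *ᵥ v
  have hu : P *ᵥ u = v := by
    rw [mulVec_mulVec, mul_nonsing_inv _ hP.det_pos.ne'.isUnit, one_mulVec]
  have hwu : (P *ᵥ w) ⬝ᵥ u = v ⬝ᵥ w := by
    rw [hP.isHermitian.mulVec_dotProduct_comm, hu, dotProduct_comm]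
  have h := hP.posSemidef.mulVec_dotProduct_self_nonneg (u - w)
  rw [mulVec_sub, hu, sub_dotProduct, dotProduct_sub, dotProduct_sub, hwu, dotProduct_comm v u] at h
  linarith

lemma PosDef.inv_mulVec_dotProduct_le_of_le_smul {P Q : Matrix n n ℝ} (hP : P.PosDef)
    (hQ : IsUnit Q.det) {t : ℝ} (ht : 0 < t) (hPQ : ∀ w, (P *ᵥ w) ⬝ᵥ w ≤ t * ((Q *ᵥ w) ⬝ᵥ w))
    (v : n → ℝ) : (Q⁻¹ *ᵥ v) ⬝ᵥ v ≤ t * ((P⁻¹ *ᵥ v) ⬝ᵥ v) := by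
  set u := Q⁻¹ *ᵥ v
  have hu : Q *ᵥ u = v := by rw [mulVec_mulVec, mul_nonsing_inv _ hQ, one_mulVec]
  have h := hP.two_mul_dotProduct_sub_le_inv_mulVec_dotProduct v (t⁻¹ • u)
  have hPu := hPQ (t⁻¹ • u)
  simp only [mulVec_smul, smul_dotProduct, dotProduct_smul, smul_eq_mul, hu,
    dotProduct_comm v u] at h hPu
  field_simp at h hPu
  have htt : t * (u ⬝ᵥ v) ≤ t * (t * ((P⁻¹ *ᵥ v) ⬝ᵥ v)) := by nlinarith
  exact le_of_mul_le_mul_left htt ht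

lemma smul_one_sub_mul_inv_mulVec_dotProduct {S : Matrix n n ℝ} {γ₁ : ℝ}
    (h : IsUnit (γ₁ • 1 + S).det) (γ₂ : ℝ) (v : n → ℝ) :
    (((γ₂ • 1 - S) * (γ₁ • 1 + S)⁻¹) *ᵥ v) ⬝ᵥ v =
      (γ₁ + γ₂) * (((γ₁ • 1 + S)⁻¹ *ᵥ v) ⬝ᵥ v) - v ⬝ᵥ v := by
  have hsplit : γ₂ • 1 - S = (γ₁ + γ₂) • 1 - (γ₁ • 1 + S) := by
    rw [add_smul]; abel
  rw [hsplit, sub_mul, smul_mul, one_mul, mul_nonsing_inv _ h, sub_mulVec, smul_mulVec,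
    one_mulVec, sub_dotProduct, smul_dotProduct, smul_eq_mul]

end Matrix

theorem direct_form_comparison_general (N : ℕ)
    (S1 S2 : Matrix (Fin N) (Fin N) ℝ) (hS1 : S1.PosDef) (hS2 : S2.PosDef)
    (lmin1 lmax1 lmin2 lmax2 : ℝ)
    (hlmin2 : IsLeast (Set.range hS2.isHermitian.eigenvalues) lmin2)
    (hlmax2 : IsGreatest (Set.range hS2.isHermitian.eigenvalues) lmax2)
    (s t : ℝ) (ht : 1 ≤ t)
    (hA1 : ∀ v : Fin N → ℝ,
      s * ((S1 *ᵥ v) ⬝ᵥ v) ≤ (S2 *ᵥ v) ⬝ᵥ v ∧ (S2 *ᵥ v) ⬝ᵥ v ≤ t * ((S1 *ᵥ v) ⬝ᵥ v))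
    (γ1 γ2 : ℝ) (hγ1 : 0 < γ1) (hγ1' : γ1 ≤ min lmin1 lmin2)
    (hγ2 : 3 * max lmax1 lmax2 ≤ γ2) :
    ∀ v : Fin N → ℝ,
      (((γ2 • (1 : Matrix (Fin N) (Fin N) ℝ) - S1) *
          (γ1 • (1 : Matrix (Fin N) (Fin N) ℝ) + S1)⁻¹) *ᵥ v) ⬝ᵥ v ≤
        (2 * t - 1) *
          ((((γ2 • (1 : Matrix (Fin N) (Fin N) ℝ) - S2) *
            (γ1 • (1 : Matrix (Fin N) (Fin N) ℝ) + S2)⁻¹) *ᵥ v) ⬝ᵥ v) := by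
  intro v
  have hA₁ : (γ1 • 1 + S1).PosDef := (PosDef.one.smul hγ1).add_posSemidef hS1.posSemidef
  have hA₂ : (γ1 • 1 + S2).PosDef := (PosDef.one.smul hγ1).add_posSemidef hS2.posSemidef
  set a := ((γ1 • 1 + S1)⁻¹ *ᵥ v) ⬝ᵥ v
  set b := ((γ1 • 1 + S2)⁻¹ *ᵥ v) ⬝ᵥ v
  have hab : a ≤ t * b := by
    refine hA₂.inv_mulVec_dotProduct_le_of_le_smul hA₁.det_pos.ne'.isUnit (by linarith) ?_ v
    intro w
    rw [smul_one_add_mulVec_dotProduct, smul_one_add_mulVec_dotProduct]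
    have hww : 0 ≤ w ⬝ᵥ w := by simpa using dotProduct_self_star_nonneg w
    nlinarith [(hA1 w).2, mul_nonneg (mul_nonneg (sub_nonneg.2 ht) hγ1.le) hww]
  have hle : γ1 ≤ lmax2 := (hγ1'.trans (min_le_right _ _)).trans (hlmax2.2 hlmin2.1)
  have hvb : v ⬝ᵥ v ≤ (γ1 + lmax2) * b := by
    have hA₂_le : ∀ w, ((γ1 • 1 + S2) *ᵥ w) ⬝ᵥ w ≤ (γ1 + lmax2) * ((1 *ᵥ w) ⬝ᵥ w) := fun w ↦ by
      rw [smul_one_add_mulVec_dotProduct, one_mulVec]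
      linarith [hS2.isHermitian.mulVec_dotProduct_self_le (fun i ↦ hlmax2.2 ⟨i, rfl⟩) w]
    simpa using hA₂.inv_mulVec_dotProduct_le_of_le_smul (by simp) (by linarith) hA₂_le v
  have hb : 0 ≤ b := hA₂.inv.posSemidef.mulVec_dotProduct_self_nonneg v
  have hc : 2 * (γ1 + lmax2) ≤ γ1 + γ2 := by linarith [le_max_right lmax1 lmax2]
  have h2v : 2 * (v ⬝ᵥ v) ≤ (γ1 + γ2) * b := by nlinarith
  rw [smul_one_sub_mul_inv_mulVec_dotProduct hA₁.det_pos.ne'.isUnit,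
    smul_one_sub_mul_inv_mulVec_dotProduct hA₂.det_pos.ne'.isUnit]
  calc (γ1 + γ2) * a - v ⬝ᵥ v ≤ (γ1 + γ2) * (t * b) - v ⬝ᵥ v := by gcongr; linarith
    _ ≤ (2 * t - 1) * ((γ1 + γ2) * b - v ⬝ᵥ v) := by
      nlinarith [mul_nonneg (sub_nonneg.2 ht) (sub_nonneg.2 h2v)]

/-- under Assumptions (A1) and (A2), for every `v ∈ ℝ^N` one has
`⟨(γ₂I - S₁)(γ₁I + S₁)⁻¹v, v⟩ ≤ (2t - 1)·⟨(γ₂I - S₂)(γ₁I + S₂)⁻¹v, v⟩`. -/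
theorem direct_form_comparison (N : ℕ) (hN : 1 ≤ N)
    (S1 S2 : Matrix (Fin N) (Fin N) ℝ) (hS1 : S1.PosDef) (hS2 : S2.PosDef)
    (lmin1 lmax1 lmin2 lmax2 : ℝ)
    (hlmin1 : IsLeast (Set.range hS1.isHermitian.eigenvalues) lmin1)
    (hlmax1 : IsGreatest (Set.range hS1.isHermitian.eigenvalues) lmax1)
    (hlmin2 : IsLeast (Set.range hS2.isHermitian.eigenvalues) lmin2)
    (hlmax2 : IsGreatest (Set.range hS2.isHermitian.eigenvalues) lmax2)
    (s t : ℝ) (hs : 0 < s) (hs1 : s ≤ 1) (ht : 1 ≤ t)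
    (hA1 : ∀ v : Fin N → ℝ,
      s * ((S1 *ᵥ v) ⬝ᵥ v) ≤ (S2 *ᵥ v) ⬝ᵥ v ∧ (S2 *ᵥ v) ⬝ᵥ v ≤ t * ((S1 *ᵥ v) ⬝ᵥ v))
    (γ1 γ2 : ℝ) (hγ1 : 0 < γ1) (hγ1' : γ1 ≤ min lmin1 lmin2)
    (hγ2 : 3 * max lmax1 lmax2 ≤ γ2) :
    ∀ v : Fin N → ℝ,
      (((γ2 • (1 : Matrix (Fin N) (Fin N) ℝ) - S1) *
          (γ1 • (1 : Matrix (Fin N) (Fin N) ℝ) + S1)⁻¹) *ᵥ v) ⬝ᵥ v ≤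
        (2 * t - 1) *
          ((((γ2 • (1 : Matrix (Fin N) (Fin N) ℝ) - S2) *
            (γ1 • (1 : Matrix (Fin N) (Fin N) ℝ) + S2)⁻¹) *ᵥ v) ⬝ᵥ v) :=
  direct_form_comparison_general N S1 S2 hS1 hS2 lmin1 lmax1 lmin2 lmax2 hlmin2 hlmax2 s t ht hA1 γ1
    γ2 hγ1 hγ1' hγ2
end
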